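/- arXiv:2003.04953 — 7 statements merged into one kernel-verified Lean document; each statement's English description precedes it below -/
import Mathlib

section
/- (Safety via prediction) For any trajectory of Σ_aug with d(s) ∈ D for all s ≥ 0: if x̂_τ(t) ∈ X ⊖ D_τ for all t ≥ 0, then x(t+τ) ∈ X for all t ≥ 0. -/
open Finset

/-- A trajectory of the augmented system `Σ_aug`: `x : ℕ → ℝⁿ` is the state sequence,
`uu t i` is the delayed-input component `u_i(t)` (meaningful for `1 ≤ i ≤ τ`),
`u` is the control input sequence and `d` the disturbance sequence. The dynamics are
`x(t+1) = A x(t) + B u₁(t) + F d(t)`, `u_i(t+1) = u_{i+1}(t)` for `1 ≤ i ≤ τ-1`, and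
`u_τ(t+1) = u(t)`. -/
def IsAugTraj {n m k : ℕ} (τ : ℕ) (A : Matrix (Fin n) (Fin n) ℝ)
    (B : Matrix (Fin n) (Fin m) ℝ) (F : Matrix (Fin n) (Fin k) ℝ)
    (x : ℕ → Fin n → ℝ) (uu : ℕ → ℕ → Fin m → ℝ) (u : ℕ → Fin m → ℝ)
    (d : ℕ → Fin k → ℝ) : Prop :=
  ∀ t : ℕ,
    x (t + 1) = A.mulVec (x t) + B.mulVec (uu t 1) + F.mulVec (d t) ∧
    (∀ i : ℕ, 1 ≤ i → i < τ → uu (t + 1) i = uu t (i + 1)) ∧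
    uu (t + 1) τ = u t

/-- The prediction `x̂_τ(t) = A^τ x(t) + Σ_{i=1}^{τ} A^{i-1} B u_{τ-i+1}(t)`. -/
def xhat {n m : ℕ} (τ : ℕ) (A : Matrix (Fin n) (Fin n) ℝ) (B : Matrix (Fin n) (Fin m) ℝ)
    (x : ℕ → Fin n → ℝ) (uu : ℕ → ℕ → Fin m → ℝ) (t : ℕ) : Fin n → ℝ :=
  (A ^ τ).mulVec (x t) +
    ∑ i ∈ Finset.Icc 1 τ, (A ^ (i - 1)).mulVec (B.mulVec (uu t (τ - i + 1)))

open Pointwise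

/-- `D_τ = A⁰FD ⊕ A¹FD ⊕ ⋯ ⊕ A^{τ-1}FD`, the Minkowski sum of the sets `A^{i-1} F D`
for `i = 1, …, τ`. -/
def Dtau {n k : ℕ} (τ : ℕ) (A : Matrix (Fin n) (Fin n) ℝ) (F : Matrix (Fin n) (Fin k) ℝ)
    (D : Set (Fin k → ℝ)) : Set (Fin n → ℝ) :=
  ∑ i ∈ Finset.Icc 1 τ, (fun v => (A ^ (i - 1)).mulVec (F.mulVec v)) '' D

/-- The Minkowski difference `S₁ ⊖ S₂ = {x : x + y ∈ S₁ for all y ∈ S₂}`. -/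
def minkDiff {n : ℕ} (S₁ S₂ : Set (Fin n → ℝ)) : Set (Fin n → ℝ) :=
  {x | ∀ y ∈ S₂, x + y ∈ S₁}

/-- (Safety via prediction) For any trajectory of `Σ_aug` with `d(s) ∈ D` for all `s`:
if `x̂_τ(t) ∈ X ⊖ D_τ` for all `t ≥ 0`, then `x(t+τ) ∈ X` for all `t ≥ 0`. -/
theorem aug_safety_via_prediction (n m k : ℕ) (hn : 0 < n) (hm : 0 < m) (hk : 0 < k)
    (τ : ℕ) (hτ : 1 ≤ τ) (A : Matrix (Fin n) (Fin n) ℝ) (B : Matrix (Fin n) (Fin m) ℝ)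
    (F : Matrix (Fin n) (Fin k) ℝ) (D : Set (Fin k → ℝ)) (X : Set (Fin n → ℝ))
    (x : ℕ → Fin n → ℝ) (uu : ℕ → ℕ → Fin m → ℝ) (u : ℕ → Fin m → ℝ) (d : ℕ → Fin k → ℝ)
    (htraj : IsAugTraj τ A B F x uu u d) (hd : ∀ s : ℕ, d s ∈ D)
    (hpred : ∀ t : ℕ, xhat τ A B x uu t ∈ minkDiff X (Dtau τ A F D)) :
    ∀ t : ℕ, x (t + τ) ∈ X := by
  -- shift lemma for delayed inputs
  have hshift : ∀ r : ℕ, r + 1 ≤ τ → ∀ s : ℕ, uu (s + r) 1 = uu s (r + 1) := by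
    intro r
    induction r with
    | zero => intro _ s; simp
    | succ r ih =>
      intro hr s
      have h1 : uu (s + (r + 1)) 1 = uu ((s + 1) + r) 1 := by ring_nf
      rw [h1, ih (by omega) (s + 1)]
      exact (htraj s).2.1 (r + 1) (by omega) (by omega)
  -- unrolling lemma
  have hunroll : ∀ t j : ℕ, j ≤ τ →
      x (t + j) = (A ^ j).mulVec (x t)
        + ∑ i ∈ Finset.Icc 1 j, (A ^ (i - 1)).mulVec (B.mulVec (uu (t + j - i) 1))
        + ∑ i ∈ Finset.Icc 1 j, (A ^ (i - 1)).mulVec (F.mulVec (d (t + j - i))) := by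
    intro t j
    induction j with
    | zero => intro _; simp
    | succ j ih =>
      intro hj
      have hx := (htraj (t + j)).1
      have hxj : x (t + (j + 1)) = A.mulVec (x (t + j)) + B.mulVec (uu (t + j) 1)
          + F.mulVec (d (t + j)) := by rw [show t + (j + 1) = t + j + 1 by ring]; exact hx
      rw [hxj, ih (by omega)]
      rw [Matrix.mulVec_add, Matrix.mulVec_add]
      have hpow : ∀ (p : ℕ) (v : Fin n → ℝ),
          A.mulVec ((A ^ p).mulVec v) = (A ^ (p + 1)).mulVec v := by
        intro p v
        rw [Matrix.mulVec_mulVec, ← pow_succ']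
      rw [hpow j (x t)]
      have msum : ∀ (g : ℕ → Fin n → ℝ),
          A.mulVec (∑ i ∈ Finset.Icc 1 j, g i) = ∑ i ∈ Finset.Icc 1 j, A.mulVec (g i) := by
        intro g
        simp only [← Matrix.mulVecLin_apply]
        exact map_sum A.mulVecLin g (Finset.Icc 1 j)
      rw [msum, msum]
      have hsum : ∀ (w : ℕ → Fin n → ℝ),
          ∑ i ∈ Finset.Icc 1 j, A.mulVec ((A ^ (i - 1)).mulVec (w (t + j - i)))
            = ∑ i ∈ Finset.Icc 2 (j + 1), (A ^ (i - 1)).mulVec (w (t + (j + 1) - i)) := by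
        intro w
        rw [show Finset.Icc 2 (j + 1) = Finset.map ⟨fun i => i + 1, add_left_injective 1⟩
          (Finset.Icc 1 j) by
            ext a
            simp only [Finset.mem_Icc, Finset.mem_map, Function.Embedding.coeFn_mk]
            constructor
            · intro h; exact ⟨a - 1, by omega, by omega⟩
            · rintro ⟨b, hb, rfl⟩; omega, Finset.sum_map]
        refine Finset.sum_congr rfl fun i hi => ?_
        simp only [Finset.mem_Icc] at hi
        simp only [Function.Embedding.coeFn_mk]
        rw [hpow (i - 1), show i - 1 + 1 = i + 1 - 1 by omega,
          show t + (j + 1) - (i + 1) = t + j - i by omega]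
      have hsplit : ∀ (w : ℕ → Fin n → ℝ),
          ∑ i ∈ Finset.Icc 1 (j + 1), (A ^ (i - 1)).mulVec (w (t + (j + 1) - i))
            = (A ^ 0).mulVec (w (t + j))
              + ∑ i ∈ Finset.Icc 2 (j + 1), (A ^ (i - 1)).mulVec (w (t + (j + 1) - i)) := by
        intro w
        rw [show Finset.Icc 1 (j + 1) = insert 1 (Finset.Icc 2 (j + 1)) by
          ext a; simp; omega, Finset.sum_insert (by simp)]
        simp
      rw [hsum (fun s => B.mulVec (uu s 1)), hsum (fun s => F.mulVec (d s)),
        hsplit (fun s => B.mulVec (uu s 1)), hsplit (fun s => F.mulVec (d s))]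
      simp only [pow_zero, Matrix.one_mulVec]
      abel
  intro t
  have key := hunroll t τ le_rfl
  -- rewrite uu terms via shift
  have hmid : ∑ i ∈ Finset.Icc 1 τ, (A ^ (i - 1)).mulVec (B.mulVec (uu (t + τ - i) 1))
      = ∑ i ∈ Finset.Icc 1 τ, (A ^ (i - 1)).mulVec (B.mulVec (uu t (τ - i + 1))) := by
    refine Finset.sum_congr rfl fun i hi => ?_
    simp only [Finset.mem_Icc] at hi
    rw [show t + τ - i = t + (τ - i) by omega, hshift (τ - i) (by omega) t]
  set w : Fin n → ℝ := ∑ i ∈ Finset.Icc 1 τ, (A ^ (i - 1)).mulVec (F.mulVec (d (t + τ - i)))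
    with hw
  have hkey2 : x (t + τ) = xhat τ A B x uu t + w := by
    rw [key, hmid, xhat]
  have hwmem : w ∈ Dtau τ A F D := by
    rw [hw, Dtau]
    exact Set.finset_sum_mem_finset_sum _ _ _
      (fun i _ => Set.mem_image_of_mem _ (hd (t + τ - i)))
  rw [hkey2]
  exact hpred t w hwmem
end

section
/- (Corollary 1) If Ĉ ⊆ ℝ^n is controlled invariant within X ⊖ D_τ for the auxiliary system Σ_aux, then C_ext is controlled invariant within S for the augmented system Σ_aug. -/
open Pointwise

/-- The transition map of the augmented system `Σ_aug` on states
`(x, u₁, …, u_τ) ∈ ℝⁿ × (ℝᵐ)^τ`: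
`g((x,u₁,…,u_τ), u, d) = (A x + B u₁ + F d, u₂, …, u_τ, u)`. -/
def gAug {n m k : ℕ} (τ : ℕ) (hτ : 0 < τ) (A : Matrix (Fin n) (Fin n) ℝ)
    (B : Matrix (Fin n) (Fin m) ℝ) (F : Matrix (Fin n) (Fin k) ℝ)
    (z : (Fin n → ℝ) × (Fin τ → Fin m → ℝ)) (u : Fin m → ℝ) (d : Fin k → ℝ) :
    (Fin n → ℝ) × (Fin τ → Fin m → ℝ) :=
  (A.mulVec z.1 + B.mulVec (z.2 ⟨0, hτ⟩) + F.mulVec d,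
    fun i => if h : (i : ℕ) + 1 < τ then z.2 ⟨(i : ℕ) + 1, h⟩ else u)

/-- The safe set `S = X × U^τ` of `Σ_aug`. -/
def safeAug {n m : ℕ} (τ : ℕ) (U : Set (Fin m → ℝ)) (X : Set (Fin n → ℝ)) :
    Set ((Fin n → ℝ) × (Fin τ → Fin m → ℝ)) :=
  {z | z.1 ∈ X ∧ ∀ i : Fin τ, z.2 i ∈ U}

/-- `C` is controlled invariant within `S = X × U^τ` for the augmented system `Σ_aug`. -/
def CtrlInvAug {n m k : ℕ} (τ : ℕ) (hτ : 0 < τ) (A : Matrix (Fin n) (Fin n) ℝ)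
    (B : Matrix (Fin n) (Fin m) ℝ) (F : Matrix (Fin n) (Fin k) ℝ)
    (U : Set (Fin m → ℝ)) (D : Set (Fin k → ℝ)) (X : Set (Fin n → ℝ))
    (C : Set ((Fin n → ℝ) × (Fin τ → Fin m → ℝ))) : Prop :=
  C ⊆ safeAug τ U X ∧ ∀ z ∈ C, ∃ u ∈ U, ∀ d ∈ D, gAug τ hτ A B F z u d ∈ C

/-- The transition map of the auxiliary system `Σ_aux`:
`f̂(x̂, u, d) = A x̂ + B u + A^τ F d`. -/
def fAux {n m k : ℕ} (τ : ℕ) (A : Matrix (Fin n) (Fin n) ℝ)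
    (B : Matrix (Fin n) (Fin m) ℝ) (F : Matrix (Fin n) (Fin k) ℝ)
    (xh : Fin n → ℝ) (u : Fin m → ℝ) (d : Fin k → ℝ) : Fin n → ℝ :=
  A.mulVec xh + B.mulVec u + (A ^ τ).mulVec (F.mulVec d)

/-- `Ĉ` is controlled invariant within `X ⊖ D_τ` for the auxiliary system `Σ_aux`. -/
def CtrlInvAux {n m k : ℕ} (τ : ℕ) (A : Matrix (Fin n) (Fin n) ℝ)
    (B : Matrix (Fin n) (Fin m) ℝ) (F : Matrix (Fin n) (Fin k) ℝ)
    (U : Set (Fin m → ℝ)) (D : Set (Fin k → ℝ)) (X : Set (Fin n → ℝ))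
    (Ch : Set (Fin n → ℝ)) : Prop :=
  Ch ⊆ minkDiff X (Dtau τ A F D) ∧
    ∀ xh ∈ Ch, ∃ u ∈ U, ∀ d ∈ D, fAux τ A B F xh u d ∈ Ch

/-- The prediction map on augmented states:
`x̂_τ(x, u₁, …, u_τ) = A^τ x + Σ_{i=1}^{τ} A^{i-1} B u_{τ-i+1}`
(written with the 0-based index `q = τ - i`, so that the coefficient of `u_{q+1}` is
`A^{τ-1-q}`). -/
def predMap {n m : ℕ} (τ : ℕ) (A : Matrix (Fin n) (Fin n) ℝ)
    (B : Matrix (Fin n) (Fin m) ℝ) (z : (Fin n → ℝ) × (Fin τ → Fin m → ℝ)) : Fin n → ℝ :=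
  (A ^ τ).mulVec z.1 + ∑ q : Fin τ, (A ^ (τ - 1 - (q : ℕ))).mulVec (B.mulVec (z.2 q))

/-- `C_τ = {(x, u₁, …, u_τ) : A^τ x + Σ_{i=1}^{τ} A^{i-1} B u_{τ-i+1} ∈ Ĉ}`. -/
def Ctau {n m : ℕ} (τ : ℕ) (A : Matrix (Fin n) (Fin n) ℝ) (B : Matrix (Fin n) (Fin m) ℝ)
    (Ch : Set (Fin n → ℝ)) : Set ((Fin n → ℝ) × (Fin τ → Fin m → ℝ)) :=
  {z | predMap τ A B z ∈ Ch}

/-- For `0 ≤ j ≤ τ-1`,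
`C_j = {(x, u₁,…,u_τ) : A^j x + Σ_{i=1}^{j} A^{i-1} B u_{j-i+1} ∈ X ⊖ (A⁰FD ⊕ ⋯ ⊕ A^{j-1}FD)}`
(written with the 0-based index `q = j - i`, only indices `q < j` contributing). -/
def Cj {n m k : ℕ} (τ : ℕ) (A : Matrix (Fin n) (Fin n) ℝ) (B : Matrix (Fin n) (Fin m) ℝ)
    (F : Matrix (Fin n) (Fin k) ℝ) (D : Set (Fin k → ℝ)) (X : Set (Fin n → ℝ)) (j : ℕ) :
    Set ((Fin n → ℝ) × (Fin τ → Fin m → ℝ)) :=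
  {z | (A ^ j).mulVec z.1 +
        (∑ q : Fin τ, if (q : ℕ) < j then (A ^ (j - 1 - (q : ℕ))).mulVec (B.mulVec (z.2 q))
          else 0) ∈ minkDiff X (Dtau j A F D)}

/-- `C_ext = C_0 ∩ C_1 ∩ ⋯ ∩ C_{τ-1} ∩ C_τ ∩ S`. -/
def Cext {n m k : ℕ} (τ : ℕ) (A : Matrix (Fin n) (Fin n) ℝ) (B : Matrix (Fin n) (Fin m) ℝ)
    (F : Matrix (Fin n) (Fin k) ℝ) (U : Set (Fin m → ℝ)) (D : Set (Fin k → ℝ))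
    (X : Set (Fin n → ℝ)) (Ch : Set (Fin n → ℝ)) :
    Set ((Fin n → ℝ) × (Fin τ → Fin m → ℝ)) :=
  (⋂ j ∈ Finset.range τ, Cj τ A B F D X j) ∩ Ctau τ A B Ch ∩ safeAug τ U X

lemma Dtau_succ {n k : ℕ} (j : ℕ) (A : Matrix (Fin n) (Fin n) ℝ) (F : Matrix (Fin n) (Fin k) ℝ)
    (D : Set (Fin k → ℝ)) :
    Dtau (j+1) A F D = Dtau j A F D + (fun v => (A ^ j).mulVec (F.mulVec v)) '' D := by
  rw [Dtau, Finset.sum_Icc_succ_top (Nat.le_add_left 1 j)]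
  simp [Dtau]

lemma Dtau_zero {n k : ℕ} (A : Matrix (Fin n) (Fin n) ℝ) (F : Matrix (Fin n) (Fin k) ℝ)
    (D : Set (Fin k → ℝ)) : Dtau 0 A F D = 0 := by
  simp [Dtau]

lemma minkDiff_step {n k : ℕ} (j : ℕ) (A : Matrix (Fin n) (Fin n) ℝ)
    (F : Matrix (Fin n) (Fin k) ℝ) (D : Set (Fin k → ℝ)) (X : Set (Fin n → ℝ))
    (w : Fin n → ℝ) (hw : w ∈ minkDiff X (Dtau (j+1) A F D)) {d : Fin k → ℝ} (hd : d ∈ D) :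
    w + (A ^ j).mulVec (F.mulVec d) ∈ minkDiff X (Dtau j A F D) := by
  intro y hy
  have hmem : y + (A ^ j).mulVec (F.mulVec d) ∈ Dtau (j+1) A F D := by
    rw [Dtau_succ]
    exact Set.add_mem_add hy ⟨d, hd, rfl⟩
  have := hw _ hmem
  convert this using 1
  abel

def vOf {n m : ℕ} (τ : ℕ) (A : Matrix (Fin n) (Fin n) ℝ) (B : Matrix (Fin n) (Fin m) ℝ)
    (j : ℕ) (z : (Fin n → ℝ) × (Fin τ → Fin m → ℝ)) : Fin n → ℝ :=
  (A ^ j).mulVec z.1 +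
    ∑ q : Fin τ, if (q : ℕ) < j then (A ^ (j - 1 - (q : ℕ))).mulVec (B.mulVec (z.2 q)) else 0

lemma predMap_eq_vOf {n m : ℕ} (τ : ℕ) (A : Matrix (Fin n) (Fin n) ℝ)
    (B : Matrix (Fin n) (Fin m) ℝ) (z : (Fin n → ℝ) × (Fin τ → Fin m → ℝ)) :
    predMap τ A B z = vOf τ A B τ z := by
  simp [predMap, vOf, Fin.is_lt]

lemma gAug_snd_castSucc {n m k t : ℕ} (hτ : 0 < t + 1) (A : Matrix (Fin n) (Fin n) ℝ)
    (B : Matrix (Fin n) (Fin m) ℝ) (F : Matrix (Fin n) (Fin k) ℝ)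
    (z : (Fin n → ℝ) × (Fin (t+1) → Fin m → ℝ)) (u : Fin m → ℝ) (d : Fin k → ℝ)
    (q : Fin t) :
    (gAug (t+1) hτ A B F z u d).2 q.castSucc = z.2 q.succ := by
  have hq : ((q.castSucc : Fin (t+1)) : ℕ) + 1 < t + 1 := by
    simp only [Fin.coe_castSucc]; omega
  show (if h : ((q.castSucc : Fin (t+1)) : ℕ) + 1 < t + 1
      then z.2 ⟨((q.castSucc : Fin (t+1)) : ℕ) + 1, h⟩ else u) = z.2 q.succ
  rw [dif_pos hq]
  exact congrArg z.2 (Fin.ext rfl)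

lemma gAug_snd_last {n m k t : ℕ} (hτ : 0 < t + 1) (A : Matrix (Fin n) (Fin n) ℝ)
    (B : Matrix (Fin n) (Fin m) ℝ) (F : Matrix (Fin n) (Fin k) ℝ)
    (z : (Fin n → ℝ) × (Fin (t+1) → Fin m → ℝ)) (u : Fin m → ℝ) (d : Fin k → ℝ) :
    (gAug (t+1) hτ A B F z u d).2 (Fin.last t) = u := by
  show (if h : ((Fin.last t : Fin (t+1)) : ℕ) + 1 < t + 1
      then z.2 ⟨((Fin.last t : Fin (t+1)) : ℕ) + 1, h⟩ else u) = u
  rw [dif_neg (by simp)]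

lemma vOf_step {n m k τ : ℕ} (hτ : 0 < τ) (A : Matrix (Fin n) (Fin n) ℝ)
    (B : Matrix (Fin n) (Fin m) ℝ) (F : Matrix (Fin n) (Fin k) ℝ)
    (z : (Fin n → ℝ) × (Fin τ → Fin m → ℝ)) (u : Fin m → ℝ) (d : Fin k → ℝ)
    {j : ℕ} (hj : j < τ) :
    vOf τ A B j (gAug τ hτ A B F z u d) = vOf τ A B (j+1) z + (A ^ j).mulVec (F.mulVec d) := by
  obtain ⟨t, rfl⟩ : ∃ t, τ = t + 1 := ⟨τ - 1, (Nat.succ_pred_eq_of_pos hτ).symm⟩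
  have hsumL : (∑ q : Fin (t+1), if (q : ℕ) < j then
        (A ^ (j - 1 - (q : ℕ))).mulVec (B.mulVec ((gAug (t+1) hτ A B F z u d).2 q)) else 0)
      = ∑ q : Fin t, (if (q : ℕ) < j then
        (A ^ (j - 1 - (q : ℕ))).mulVec (B.mulVec (z.2 q.succ)) else 0) := by
    rw [Fin.sum_univ_castSucc]
    have hlast : ¬ ((Fin.last t : ℕ) < j) := by simp only [Fin.val_last]; omega
    rw [if_neg hlast, add_zero]
    refine Finset.sum_congr rfl fun q _ => ?_
    rw [gAug_snd_castSucc, Fin.coe_castSucc]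
  have hsumR : (∑ q : Fin (t+1), if (q : ℕ) < j + 1 then
        (A ^ (j + 1 - 1 - (q : ℕ))).mulVec (B.mulVec (z.2 q)) else 0)
      = (A ^ j).mulVec (B.mulVec (z.2 ⟨0, hτ⟩)) +
        ∑ q : Fin t, (if (q : ℕ) < j then
          (A ^ (j - 1 - (q : ℕ))).mulVec (B.mulVec (z.2 q.succ)) else 0) := by
    rw [Fin.sum_univ_succ]
    have htail : (∑ i : Fin t, if ((i.succ : Fin (t+1)) : ℕ) < j + 1 then
          (A ^ (j + 1 - 1 - ((i.succ : Fin (t+1)) : ℕ))).mulVec (B.mulVec (z.2 i.succ)) else 0)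
        = ∑ q : Fin t, (if (q : ℕ) < j then
          (A ^ (j - 1 - (q : ℕ))).mulVec (B.mulVec (z.2 q.succ)) else 0) := by
      refine Finset.sum_congr rfl fun q _ => ?_
      by_cases h : (q : ℕ) < j
      · rw [if_pos (by simp only [Fin.val_succ]; omega), if_pos h,
          show j + 1 - 1 - ((q.succ : Fin (t+1)) : ℕ) = j - 1 - (q : ℕ) from by
            simp only [Fin.val_succ]; omega]
      · rw [if_neg (by simp only [Fin.val_succ]; omega), if_neg h]
    rw [htail, if_pos (by simp : ((0 : Fin (t+1)) : ℕ) < j + 1),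
      show z.2 (0 : Fin (t+1)) = z.2 ⟨0, hτ⟩ from congrArg z.2 Fin.mk_zero.symm,
      show j + 1 - 1 - ((0 : Fin (t+1)) : ℕ) = j from by simp]
  simp only [vOf]
  rw [hsumL, hsumR]
  show (A ^ j).mulVec (A.mulVec z.1 + B.mulVec (z.2 ⟨0, hτ⟩) + F.mulVec d) + _ = _
  simp only [Matrix.mulVec_add, Matrix.mulVec_mulVec, ← pow_succ]
  abel

lemma predMap_gAug {n m k τ : ℕ} (hτ : 0 < τ) (A : Matrix (Fin n) (Fin n) ℝ)
    (B : Matrix (Fin n) (Fin m) ℝ) (F : Matrix (Fin n) (Fin k) ℝ)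
    (z : (Fin n → ℝ) × (Fin τ → Fin m → ℝ)) (u : Fin m → ℝ) (d : Fin k → ℝ) :
    predMap τ A B (gAug τ hτ A B F z u d) = fAux τ A B F (predMap τ A B z) u d := by
  obtain ⟨t, rfl⟩ : ∃ t, τ = t + 1 := ⟨τ - 1, (Nat.succ_pred_eq_of_pos hτ).symm⟩
  have hsumL : (∑ q : Fin (t+1),
        (A ^ (t + 1 - 1 - (q : ℕ))).mulVec (B.mulVec ((gAug (t+1) hτ A B F z u d).2 q)))
      = (∑ q : Fin t, (A ^ (t - (q : ℕ))).mulVec (B.mulVec (z.2 q.succ))) + B.mulVec u := by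
    rw [Fin.sum_univ_castSucc]
    congr 1
    · refine Finset.sum_congr rfl fun q _ => ?_
      rw [gAug_snd_castSucc, Fin.coe_castSucc, Nat.add_sub_cancel]
    · rw [gAug_snd_last]
      simp only [Fin.val_last, Nat.add_sub_cancel, Nat.sub_self, pow_zero, Matrix.one_mulVec]
  have hsumR : (∑ q : Fin (t+1), (A ^ (t + 1 - 1 - (q : ℕ))).mulVec (B.mulVec (z.2 q)))
      = (A ^ t).mulVec (B.mulVec (z.2 0)) +
        ∑ q : Fin t, (A ^ (t - 1 - (q : ℕ))).mulVec (B.mulVec (z.2 q.succ)) := by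
    rw [Fin.sum_univ_succ]
    have htail : (∑ i : Fin t,
          (A ^ (t + 1 - 1 - ((i.succ : Fin (t+1)) : ℕ))).mulVec (B.mulVec (z.2 i.succ)))
        = ∑ q : Fin t, (A ^ (t - 1 - (q : ℕ))).mulVec (B.mulVec (z.2 q.succ)) := by
      refine Finset.sum_congr rfl fun q _ => ?_
      rw [show t + 1 - 1 - ((q.succ : Fin (t+1)) : ℕ) = t - 1 - (q : ℕ) from by
        simp only [Fin.val_succ]; omega]
    rw [htail, show t + 1 - 1 - ((0 : Fin (t+1)) : ℕ) = t from by simp]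
  simp only [predMap, fAux]
  rw [hsumL, hsumR]
  have hz0 : z.2 ⟨0, hτ⟩ = z.2 0 := congrArg z.2 Fin.mk_zero
  have hsum2 : A.mulVec (∑ q : Fin t, (A ^ (t - 1 - (q : ℕ)) * B).mulVec (z.2 q.succ))
      = ∑ q : Fin t, (A ^ (t - (q : ℕ)) * B).mulVec (z.2 q.succ) := by
    rw [show A.mulVec = (Matrix.mulVecLin A : (Fin n → ℝ) →ₗ[ℝ] (Fin n → ℝ)) from rfl,
      map_sum]
    refine Finset.sum_congr rfl fun q _ => ?_
    have hq : (q : ℕ) < t := q.isLt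
    rw [Matrix.mulVecLin_apply, Matrix.mulVec_mulVec, ← Matrix.mul_assoc,
      show A * A ^ (t - 1 - (q : ℕ)) = A ^ (t - (q : ℕ)) from by
        rw [← pow_succ']; congr 1; omega]
  show (A ^ (t+1)).mulVec (A.mulVec z.1 + B.mulVec (z.2 ⟨0, hτ⟩) + F.mulVec d) + _ = _
  simp only [Matrix.mulVec_add, hz0, Matrix.mulVec_mulVec]
  rw [hsum2, show A ^ (t+1) * A = A ^ (t+2) from by rw [← pow_succ],
    show A * A ^ (t+1) = A ^ (t+2) from by rw [← pow_succ'],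
    show A * (A ^ t * B) = A ^ (t+1) * B from by rw [← Matrix.mul_assoc, ← pow_succ']]
  abel

/-- (Corollary 1) If `Ĉ` is controlled invariant within `X ⊖ D_τ` for the auxiliary system
`Σ_aux`, then `C_ext` is controlled invariant within `S` for the augmented system `Σ_aug`. -/
theorem cext_ctrlInv_of_aux_ctrlInv (n m k : ℕ) (hn : 0 < n) (hm : 0 < m) (hk : 0 < k)
    (τ : ℕ) (hτ : 1 ≤ τ) (A : Matrix (Fin n) (Fin n) ℝ) (B : Matrix (Fin n) (Fin m) ℝ)
    (F : Matrix (Fin n) (Fin k) ℝ) (U : Set (Fin m → ℝ)) (D : Set (Fin k → ℝ))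
    (X : Set (Fin n → ℝ)) (Ch : Set (Fin n → ℝ))
    (hCh : CtrlInvAux τ A B F U D X Ch) :
    CtrlInvAug τ hτ A B F U D X (Cext τ A B F U D X Ch) := by
  constructor
  · intro z hz
    exact hz.2
  · rintro z ⟨⟨hCjs, hCτ⟩, hS⟩
    have hτ0 : 0 < τ := hτ
    have hCjs' : ∀ j, j < τ → vOf τ A B j z ∈ minkDiff X (Dtau j A F D) := fun j hj =>
      Set.mem_iInter₂.1 hCjs j (Finset.mem_range.2 hj)
    have hpred : predMap τ A B z ∈ Ch := hCτ
    obtain ⟨u, hu, hinv⟩ := hCh.2 _ hpred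
    refine ⟨u, hu, fun d hd => ?_⟩
    have hvj : ∀ j, j < τ →
        vOf τ A B j (gAug τ hτ0 A B F z u d) ∈ minkDiff X (Dtau j A F D) := by
      intro j hj
      rw [vOf_step hτ0 A B F z u d hj]
      have hmem : vOf τ A B (j+1) z ∈ minkDiff X (Dtau (j+1) A F D) := by
        rcases Nat.lt_or_ge (j+1) τ with h | h
        · exact hCjs' (j+1) h
        · have hjt : j + 1 = τ := by omega
          rw [hjt, ← predMap_eq_vOf]
          exact hCh.1 hpred
      exact minkDiff_step j A F D X _ hmem hd
    refine ⟨⟨?_, ?_⟩, ?_, ?_⟩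
    · exact Set.mem_iInter₂.2 fun j hj => hvj j (Finset.mem_range.1 hj)
    · show predMap τ A B (gAug τ hτ0 A B F z u d) ∈ Ch
      rw [predMap_gAug]
      exact hinv d hd
    · have h0 := hvj 0 hτ0
      have hv0 : vOf τ A B 0 (gAug τ hτ0 A B F z u d) = (gAug τ hτ0 A B F z u d).1 := by
        simp [vOf]
      rw [hv0] at h0
      have := h0 0 (by rw [Dtau_zero]; exact Set.mem_zero.2 rfl)
      simpa using this
    · intro i
      show (if h : (i : ℕ) + 1 < τ then z.2 ⟨(i : ℕ) + 1, h⟩ else u) ∈ U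
      split
      · exact hS.2 _
      · exact hu
end

section
/- Every set C ⊆ ℝ^n × (ℝ^m)^τ that is controlled invariant within S for the augmented system Σ_aug satisfies C ⊆ C_j for every j with 0 ≤ j ≤ τ−1, where C_j = {(x, u₁, …, u_τ) : A^j x + Σ_{i=1}^{j} A^{i-1} B u_{j-i+1} ∈ X ⊖ (A⁰FD ⊕ ⋯ ⊕ A^{j-1}FD)}. -/
open Pointwise

lemma traj_aux {n m k : ℕ} (τ : ℕ) (hτ : 0 < τ) (A : Matrix (Fin n) (Fin n) ℝ)
    (B : Matrix (Fin n) (Fin m) ℝ) (F : Matrix (Fin n) (Fin k) ℝ)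
    (U : Set (Fin m → ℝ)) (D : Set (Fin k → ℝ)) (X : Set (Fin n → ℝ))
    (C : Set ((Fin n → ℝ) × (Fin τ → Fin m → ℝ)))
    (hC : CtrlInvAug τ hτ A B F U D X C) :
    ∀ t, t ≤ τ → ∀ z ∈ C, ∀ d : ℕ → (Fin k → ℝ), (∀ i, d i ∈ D) →
      ∃ z' ∈ C,
        z'.1 = (A ^ t).mulVec z.1
          + (∑ q : Fin τ, if (q : ℕ) < t then
              (A ^ (t - 1 - (q : ℕ))).mulVec (B.mulVec (z.2 q)) else 0)
          + ∑ i ∈ Finset.range t, (A ^ (t - 1 - i)).mulVec (F.mulVec (d i))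
        ∧ ∀ (q : ℕ) (h : q + t < τ), z'.2 ⟨q, by omega⟩ = z.2 ⟨q + t, h⟩ := by
  intro t
  induction t with
  | zero =>
    intro _ z hz d hd
    refine ⟨z, hz, ?_, ?_⟩
    · simp [Matrix.one_mulVec]
    · intro q h; simp
  | succ t ih =>
    intro ht z hz d hd
    obtain ⟨z', hz', h1, h2⟩ := ih (by omega) z hz d hd
    obtain ⟨u, hu, hstep⟩ := hC.2 z' hz'
    refine ⟨gAug τ hτ A B F z' u (d t), hstep (d t) (hd t), ?_, ?_⟩
    · have h0 : z'.2 ⟨0, hτ⟩ = z.2 ⟨t, by omega⟩ := by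
        have := h2 0 (by omega)
        simpa using this
      show A.mulVec z'.1 + B.mulVec (z'.2 ⟨0, hτ⟩) + F.mulVec (d t) = _
      rw [h0, h1]
      rw [Matrix.mulVec_add, Matrix.mulVec_add]
      have hpow : ∀ (s : ℕ) (v : Fin n → ℝ),
          A.mulVec ((A ^ s).mulVec v) = (A ^ (s + 1)).mulVec v := by
        intro s v
        rw [Matrix.mulVec_mulVec, ← pow_succ']
      have hsum1 : A.mulVec (∑ q : Fin τ, if (q : ℕ) < t then
            (A ^ (t - 1 - (q : ℕ))).mulVec (B.mulVec (z.2 q)) else 0)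
          = ∑ q : Fin τ, if (q : ℕ) < t then
            (A ^ (t - (q : ℕ))).mulVec (B.mulVec (z.2 q)) else 0 := by
        rw [show A.mulVec (∑ q : Fin τ, if (q : ℕ) < t then
            (A ^ (t - 1 - (q : ℕ))).mulVec (B.mulVec (z.2 q)) else 0)
            = A.mulVecLin (∑ q : Fin τ, if (q : ℕ) < t then
            (A ^ (t - 1 - (q : ℕ))).mulVec (B.mulVec (z.2 q)) else 0) from rfl,
          map_sum]
        refine Finset.sum_congr rfl fun q _ => ?_
        by_cases hq : (q : ℕ) < t
        · simp only [hq, if_true, Matrix.mulVecLin_apply]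
          rw [hpow, show t - 1 - (q : ℕ) + 1 = t - (q : ℕ) from by omega]
        · simp [hq]
      have hsum2 : A.mulVec (∑ i ∈ Finset.range t,
            (A ^ (t - 1 - i)).mulVec (F.mulVec (d i)))
          = ∑ i ∈ Finset.range t, (A ^ (t - i)).mulVec (F.mulVec (d i)) := by
        rw [show A.mulVec (∑ i ∈ Finset.range t,
            (A ^ (t - 1 - i)).mulVec (F.mulVec (d i)))
            = A.mulVecLin (∑ i ∈ Finset.range t,
            (A ^ (t - 1 - i)).mulVec (F.mulVec (d i))) from rfl, map_sum]
        refine Finset.sum_congr rfl fun i hi => ?_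
        rw [Finset.mem_range] at hi
        simp only [Matrix.mulVecLin_apply]
        rw [hpow, show t - 1 - i + 1 = t - i from by omega]
      rw [hsum1, hsum2, hpow]
      -- now reorganize
      have hnew : ∑ q : Fin τ, (if (q : ℕ) < t + 1 then
            (A ^ (t + 1 - 1 - (q : ℕ))).mulVec (B.mulVec (z.2 q)) else 0)
          = (∑ q : Fin τ, if (q : ℕ) < t then
            (A ^ (t - (q : ℕ))).mulVec (B.mulVec (z.2 q)) else 0)
            + B.mulVec (z.2 ⟨t, by omega⟩) := by
        have hsplit : ∀ q : Fin τ, (if (q : ℕ) < t + 1 then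
            (A ^ (t + 1 - 1 - (q : ℕ))).mulVec (B.mulVec (z.2 q)) else 0)
            = (if (q : ℕ) < t then
              (A ^ (t - (q : ℕ))).mulVec (B.mulVec (z.2 q)) else 0)
            + (if q = (⟨t, by omega⟩ : Fin τ) then B.mulVec (z.2 ⟨t, by omega⟩) else 0) := by
          intro q
          rcases lt_trichotomy (q : ℕ) t with h | h | h
          · have : q ≠ (⟨t, by omega⟩ : Fin τ) := by
              intro he; rw [he] at h; simp at h
            rw [if_pos h, if_pos (show (q : ℕ) < t + 1 by omega), if_neg this, add_zero,
              show t + 1 - 1 - (q : ℕ) = t - (q : ℕ) from by omega]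
          · have hqe : q = (⟨t, by omega⟩ : Fin τ) := by
              apply Fin.ext; simpa using h
            simp [hqe, Matrix.one_mulVec, show t + 1 - 1 - t = 0 from by omega]
          · have : q ≠ (⟨t, by omega⟩ : Fin τ) := by
              intro he; rw [he] at h; simp at h
            simp [show ¬ ((q:ℕ) < t + 1) by omega, show ¬ ((q:ℕ) < t) by omega, this]
        rw [Finset.sum_congr rfl fun q _ => hsplit q, Finset.sum_add_distrib,
          Finset.sum_ite_eq' Finset.univ]
        simp
      rw [hnew, Finset.sum_range_succ]
      simp only [Nat.sub_self, pow_zero, Matrix.one_mulVec, Nat.add_sub_cancel]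
      abel
    · intro q h
      show (if hq : q + 1 < τ then z'.2 ⟨q + 1, hq⟩ else u) = _
      rw [dif_pos (by omega : q + 1 < τ)]
      have e : (⟨q + 1 + t, by omega⟩ : Fin τ) = (⟨q + (t + 1), h⟩ : Fin τ) := by
        simp only [Fin.mk.injEq]; omega
      rw [h2 (q + 1) (by omega), e]

/-- Every set `C` controlled invariant within `S` for the augmented system `Σ_aug` satisfies
`C ⊆ C_j` for every `0 ≤ j ≤ τ-1`. -/
theorem ctrlInvAug_subset_cj (n m k : ℕ) (hn : 0 < n) (hm : 0 < m) (hk : 0 < k)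
    (τ : ℕ) (hτ : 1 ≤ τ) (A : Matrix (Fin n) (Fin n) ℝ) (B : Matrix (Fin n) (Fin m) ℝ)
    (F : Matrix (Fin n) (Fin k) ℝ) (U : Set (Fin m → ℝ)) (D : Set (Fin k → ℝ))
    (X : Set (Fin n → ℝ)) (hD : D.Nonempty)
    (C : Set ((Fin n → ℝ) × (Fin τ → Fin m → ℝ)))
    (hC : CtrlInvAug τ hτ A B F U D X C) :
    ∀ j : ℕ, j ≤ τ - 1 → C ⊆ Cj τ A B F D X j := by
  intro j hj z hz
  have hjτ : j < τ := by omega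
  simp only [Cj, Set.mem_setOf_eq, minkDiff]
  intro y hy
  rw [Dtau, Set.mem_finset_sum] at hy
  obtain ⟨g, hg, hsum⟩ := hy
  have hwit : ∀ i ∈ Finset.Icc 1 j, ∃ v ∈ D,
      (A ^ (i - 1)).mulVec (F.mulVec v) = g i := by
    intro i hi
    obtain ⟨v, hv, he⟩ := hg hi
    exact ⟨v, hv, he⟩
  choose! v hvD hve using hwit
  set d : ℕ → (Fin k → ℝ) := fun t => if t < j then v (j - t) else hD.choose with hd_def
  have hdD : ∀ i, d i ∈ D := by
    intro i
    by_cases h : i < j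
    · simp only [hd_def, if_pos h]
      exact hvD _ (by simp only [Finset.mem_Icc]; omega)
    · simp only [hd_def, if_neg h]
      exact hD.choose_spec
  obtain ⟨z', hz', h1, _⟩ := traj_aux τ hτ A B F U D X C hC j (by omega) z hz d hdD
  have hX : z'.1 ∈ X := (hC.1 hz').1
  have hsum2 : ∑ i ∈ Finset.range j, (A ^ (j - 1 - i)).mulVec (F.mulVec (d i)) = y := by
    rw [← hsum]
    refine Finset.sum_nbij' (fun t => j - t) (fun s => j - s) ?_ ?_ ?_ ?_ ?_
    · intro a ha; rw [Finset.mem_range] at ha; simp only [Finset.mem_Icc]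
      beta_reduce; omega
    · intro a ha; rw [Finset.mem_Icc] at ha; rw [Finset.mem_range]; beta_reduce; omega
    · intro a ha; rw [Finset.mem_range] at ha; beta_reduce; omega
    · intro a ha; rw [Finset.mem_Icc] at ha; beta_reduce; omega
    · intro a ha
      rw [Finset.mem_range] at ha
      show (A ^ (j - 1 - a)).mulVec (F.mulVec (d a)) = g (j - a)
      rw [← hve (j - a) (by simp only [Finset.mem_Icc]; omega),
        show j - a - 1 = j - 1 - a from by omega]
      simp only [hd_def]
      rw [if_pos ha]
  rw [← hsum2, ← h1]
  exact hX
end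

section
/- (Prediction dynamics, preview case) For any trajectory of Σ_aug^prev and any t ≥ 0, x̂_τ(t+1) = A x̂_τ(t) + B u(t) + A^τ F₀ d₀(t) + A^{τ-p} F_p δ_f(t). -/
open Finset

/-- A trajectory of the augmented preview system `Σ_aug^prev`: `x` is the state sequence,
`uu t i` is the delayed-input component `u_i(t)` (meaningful for `1 ≤ i ≤ τ`),
`dd t j` is the previewed-disturbance component `δ_j(t)` (meaningful for `1 ≤ j ≤ p`),
`u` is the control input, `d0` the non-measurable disturbance, and `df` the incoming
previewed disturbance. The dynamics are
`x(t+1) = A x(t) + B u₁(t) + F₀ d₀(t) + F_p δ₁(t)`, `u_i(t+1) = u_{i+1}(t)` for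
`1 ≤ i ≤ τ-1`, `u_τ(t+1) = u(t)`, `δ_j(t+1) = δ_{j+1}(t)` for `1 ≤ j ≤ p-1`, and
`δ_p(t+1) = δ_f(t)`. -/
def IsPrevTraj {n m k₀ l : ℕ} (τ p : ℕ) (A : Matrix (Fin n) (Fin n) ℝ)
    (B : Matrix (Fin n) (Fin m) ℝ) (F₀ : Matrix (Fin n) (Fin k₀) ℝ)
    (Fp : Matrix (Fin n) (Fin l) ℝ) (x : ℕ → Fin n → ℝ) (uu : ℕ → ℕ → Fin m → ℝ)
    (dd : ℕ → ℕ → Fin l → ℝ) (u : ℕ → Fin m → ℝ) (d₀ : ℕ → Fin k₀ → ℝ)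
    (df : ℕ → Fin l → ℝ) : Prop :=
  ∀ t : ℕ,
    x (t + 1) =
      A.mulVec (x t) + B.mulVec (uu t 1) + F₀.mulVec (d₀ t) + Fp.mulVec (dd t 1) ∧
    (∀ i : ℕ, 1 ≤ i → i < τ → uu (t + 1) i = uu t (i + 1)) ∧
    uu (t + 1) τ = u t ∧
    (∀ j : ℕ, 1 ≤ j → j < p → dd (t + 1) j = dd t (j + 1)) ∧
    dd (t + 1) p = df t

/-- The prediction `x̂_τ(t) = A^τ x(t) + Σ_{i=1}^{τ} A^{i-1} B u_{τ-i+1}(t)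
+ Σ_{j=τ-p+1}^{τ} A^{j-1} F_p δ_{τ-j+1}(t)`. -/
def xhatP {n m l : ℕ} (τ p : ℕ) (A : Matrix (Fin n) (Fin n) ℝ)
    (B : Matrix (Fin n) (Fin m) ℝ) (Fp : Matrix (Fin n) (Fin l) ℝ)
    (x : ℕ → Fin n → ℝ) (uu : ℕ → ℕ → Fin m → ℝ) (dd : ℕ → ℕ → Fin l → ℝ)
    (t : ℕ) : Fin n → ℝ :=
  (A ^ τ).mulVec (x t) +
    (∑ i ∈ Finset.Icc 1 τ, (A ^ (i - 1)).mulVec (B.mulVec (uu t (τ - i + 1)))) +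
    ∑ j ∈ Finset.Icc (τ - p + 1) τ, (A ^ (j - 1)).mulVec (Fp.mulVec (dd t (τ - j + 1)))

open Matrix

/-! The prediction is `A^τ x(t)` plus, for each of the two shift registers (delayed inputs and
previewed disturbances), a forecast `∑ₖ A^(τ-(k+1)) C w_{k+1}` over its cells. One step of a
register moves every cell one place towards the state, which multiplies its weight by `A`; the
cell `w_1` leaves the register and its contribution `A^τ C w_1` is carried instead by `A^τ x(t+1)`,
while the new entry comes in with weight `A^(τ-L)`, `L` the register length. -/

section RegisterForecast

variable {ι κ R : Type*} [Fintype ι] [DecidableEq ι] [Fintype κ] [Semiring R]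

/-- Contribution of the cells `w 1, …, w L` of a shift register feeding the state through `C`
to the `τ`-step prediction; cell `k + 1` reaches the state after `k + 1` steps. -/
def registerForecast (A : Matrix ι ι R) (C : Matrix ι κ R) (τ L : ℕ) (w : ℕ → κ → R) : ι → R :=
  ∑ k ∈ range L, A ^ (τ - (k + 1)) *ᵥ C *ᵥ w (k + 1)

theorem sum_Icc_eq_registerForecast (A : Matrix ι ι R) (C : Matrix ι κ R) {τ L : ℕ}
    (w : ℕ → κ → R) (hLτ : L ≤ τ) :
    ∑ i ∈ Icc (τ - L + 1) τ, A ^ (i - 1) *ᵥ C *ᵥ w (τ - i + 1) = registerForecast A C τ L w := by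
  refine sum_nbij' (fun i ↦ τ - i) (fun k ↦ τ - k) ?_ ?_ ?_ ?_ ?_ <;>
    intro a ha <;> simp only [mem_Icc, mem_range] at ha ⊢
  · omega
  · omega
  · omega
  · omega
  · rw [show τ - (τ - a + 1) = a - 1 by omega]

theorem registerForecast_shift (A : Matrix ι ι R) (C : Matrix ι κ R) {τ L : ℕ}
    {w w' : ℕ → κ → R} {v : κ → R} (hL : 1 ≤ L) (hLτ : L ≤ τ)
    (hshift : ∀ j, 1 ≤ j → j < L → w' j = w (j + 1)) (hin : w' L = v) :
    registerForecast A C τ L w' + A ^ τ *ᵥ C *ᵥ w 1 =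
      A *ᵥ registerForecast A C τ L w + A ^ (τ - L) *ᵥ C *ᵥ v := by
  have hA : ∀ j < τ, ∀ y : ι → R, A *ᵥ A ^ (τ - (j + 1)) *ᵥ y = A ^ (τ - j) *ᵥ y := by
    intro j hj y
    rw [mulVec_mulVec, ← pow_succ', show τ - (j + 1) + 1 = τ - j by omega]
  obtain ⟨L, rfl⟩ : ∃ L', L = L' + 1 := ⟨L - 1, by omega⟩
  rw [registerForecast, registerForecast, sum_range_succ, mulVec_sum, sum_range_succ', hin,
    hA 0 (by omega), Nat.sub_zero]
  have hpending : ∀ k ∈ range L, A ^ (τ - (k + 1)) *ᵥ C *ᵥ w' (k + 1) =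
      A *ᵥ A ^ (τ - (k + 1 + 1)) *ᵥ C *ᵥ w (k + 1 + 1) := fun k hk ↦ by
    rw [mem_range] at hk
    rw [hA (k + 1) (by omega), hshift (k + 1) (by omega) (by omega)]
  rw [sum_congr rfl hpending, zero_add, add_right_comm]

end RegisterForecast

theorem xhatP_eq_registerForecast {n m l : ℕ} {τ p : ℕ} (hpτ : p ≤ τ)
    (A : Matrix (Fin n) (Fin n) ℝ) (B : Matrix (Fin n) (Fin m) ℝ) (Fp : Matrix (Fin n) (Fin l) ℝ)
    (x : ℕ → Fin n → ℝ) (uu : ℕ → ℕ → Fin m → ℝ) (dd : ℕ → ℕ → Fin l → ℝ) (t : ℕ) :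
    xhatP τ p A B Fp x uu dd t =
      A ^ τ *ᵥ x t + registerForecast A B τ τ (uu t) + registerForecast A Fp τ p (dd t) := by
  rw [xhatP, ← sum_Icc_eq_registerForecast A B (uu t) le_rfl, Nat.sub_self,
    sum_Icc_eq_registerForecast A Fp (dd t) hpτ]

theorem prev_prediction_dynamics_general (n m k₀ l : ℕ) (τ p : ℕ) (hτ : 1 ≤ τ) (hp1 : 1 ≤ p) (hpτ : p ≤ τ)
    (A : Matrix (Fin n) (Fin n) ℝ) (B : Matrix (Fin n) (Fin m) ℝ)
    (F₀ : Matrix (Fin n) (Fin k₀) ℝ) (Fp : Matrix (Fin n) (Fin l) ℝ)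
    (x : ℕ → Fin n → ℝ) (uu : ℕ → ℕ → Fin m → ℝ) (dd : ℕ → ℕ → Fin l → ℝ)
    (u : ℕ → Fin m → ℝ) (d₀ : ℕ → Fin k₀ → ℝ) (df : ℕ → Fin l → ℝ)
    (htraj : IsPrevTraj τ p A B F₀ Fp x uu dd u d₀ df) :
    ∀ t : ℕ,
      xhatP τ p A B Fp x uu dd (t + 1) =
        A.mulVec (xhatP τ p A B Fp x uu dd t) + B.mulVec (u t) +
          (A ^ τ).mulVec (F₀.mulVec (d₀ t)) + (A ^ (τ - p)).mulVec (Fp.mulVec (df t)) := by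
  intro t
  obtain ⟨hx, hu_shift, hu_in, hd_shift, hd_in⟩ := htraj t
  have hu := registerForecast_shift A B hτ le_rfl hu_shift hu_in
  have hd := registerForecast_shift A Fp hp1 hpτ hd_shift hd_in
  rw [Nat.sub_self, pow_zero, one_mulVec] at hu
  have hx' : A ^ τ *ᵥ x (t + 1) = A *ᵥ A ^ τ *ᵥ x t + A ^ τ *ᵥ B *ᵥ uu t 1 +
      A ^ τ *ᵥ F₀ *ᵥ d₀ t + A ^ τ *ᵥ Fp *ᵥ dd t 1 := by
    simp only [hx, mulVec_add, mulVec_mulVec, ← pow_succ, ← pow_succ']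
  rw [xhatP_eq_registerForecast hpτ, xhatP_eq_registerForecast hpτ, hx', mulVec_add, mulVec_add]
  linear_combination (norm := module) hu + hd

/-- (Prediction dynamics, preview case) For any trajectory of `Σ_aug^prev` and any `t ≥ 0`,
`x̂_τ(t+1) = A x̂_τ(t) + B u(t) + A^τ F₀ d₀(t) + A^{τ-p} F_p δ_f(t)`. -/
theorem prev_prediction_dynamics (n m k₀ l : ℕ) (hn : 0 < n) (hm : 0 < m) (hk : 0 < k₀)
    (hl : 0 < l) (τ p : ℕ) (hτ : 1 ≤ τ) (hp1 : 1 ≤ p) (hpτ : p ≤ τ)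
    (A : Matrix (Fin n) (Fin n) ℝ) (B : Matrix (Fin n) (Fin m) ℝ)
    (F₀ : Matrix (Fin n) (Fin k₀) ℝ) (Fp : Matrix (Fin n) (Fin l) ℝ)
    (x : ℕ → Fin n → ℝ) (uu : ℕ → ℕ → Fin m → ℝ) (dd : ℕ → ℕ → Fin l → ℝ)
    (u : ℕ → Fin m → ℝ) (d₀ : ℕ → Fin k₀ → ℝ) (df : ℕ → Fin l → ℝ)
    (htraj : IsPrevTraj τ p A B F₀ Fp x uu dd u d₀ df) :
    ∀ t : ℕ,
      xhatP τ p A B Fp x uu dd (t + 1) =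
        A.mulVec (xhatP τ p A B Fp x uu dd t) + B.mulVec (u t) +
          (A ^ τ).mulVec (F₀.mulVec (d₀ t)) + (A ^ (τ - p)).mulVec (Fp.mulVec (df t)) :=
  prev_prediction_dynamics_general n m k₀ l τ p hτ hp1 hpτ A B F₀ Fp x uu dd u d₀ df htraj
end

section
/- (Prediction error bound, preview case) For any trajectory of Σ_aug^prev with d₀(s) ∈ D₀ and δ_f(s) ∈ D_p for all s ≥ 0, and any t ≥ 0, x(t+τ) − x̂_τ(t) ∈ (A⁰F₀D₀ ⊕ ⋯ ⊕ A^{τ-1}F₀D₀) ⊕ (A⁰F_pD_p ⊕ ⋯ ⊕ A^{τ-p-1}F_pD_p); consequently, if x̂_τ(t) ∈ X̂ = X ⊖ ((A⁰F₀D₀ ⊕ ⋯ ⊕ A^{τ-1}F₀D₀) ⊕ (A⁰F_pD_p ⊕ ⋯ ⊕ A^{τ-p-1}F_pD_p)), then x(t+τ) ∈ X. -/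
/-! Solving the state recurrence, `x (t + τ)` is `A ^ τ x t` plus, for `j = 1, …, τ`, the term
`A ^ (j - 1)` applied to whatever enters the state at time `t + τ - j`. The delayed inputs and the
first `p` previewed disturbances entering in this window are already stored in the shift registers
`uu t` and `dd t`, so they make up exactly `x̂_τ(t)`. What remains is `τ` values of `d₀` and the
`τ - p` values of `δ_f` arriving after time `t`, which is an element of the Minkowski sum. -/

open Finset

open Pointwise

/-- The prediction error bound set
`(A⁰F₀D₀ ⊕ ⋯ ⊕ A^{a-1}F₀D₀) ⊕ (A⁰F_pD_p ⊕ ⋯ ⊕ A^{b-1}F_pD_p)`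
(a Minkowski sum over an empty index range being `{0}`). -/
def ESet {n k₀ l : ℕ} (A : Matrix (Fin n) (Fin n) ℝ) (F₀ : Matrix (Fin n) (Fin k₀) ℝ)
    (Fp : Matrix (Fin n) (Fin l) ℝ) (D₀ : Set (Fin k₀ → ℝ)) (Dp : Set (Fin l → ℝ))
    (a b : ℕ) : Set (Fin n → ℝ) :=
  (∑ i ∈ Finset.Icc 1 a, (fun v => (A ^ (i - 1)).mulVec (F₀.mulVec v)) '' D₀) +
    ∑ i ∈ Finset.Icc 1 b, (fun v => (A ^ (i - 1)).mulVec (Fp.mulVec v)) '' Dp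


open Matrix

theorem Matrix.eq_pow_mulVec_add_sum_of_recurrence {ι R : Type*} [Fintype ι] [DecidableEq ι]
    [Semiring R] (A : Matrix ι ι R) {x w : ℕ → ι → R} (h : ∀ t, x (t + 1) = A *ᵥ x t + w t)
    (t s : ℕ) : x (t + s) = A ^ s *ᵥ x t + ∑ j ∈ Icc 1 s, A ^ (j - 1) *ᵥ w (t + s - j) := by
  induction s generalizing t with
  | zero => simp
  | succ s ih =>
    rw [show t + (s + 1) = t + 1 + s by omega, ih, h, sum_Icc_succ_top (by omega), mulVec_add,
      mulVec_mulVec, ← pow_succ, Nat.add_sub_cancel, show t + 1 + s - (s + 1) = t by omega,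
      add_assoc, add_comm (A ^ s *ᵥ w t)]

def IsShiftRegister {α : Type*} (N : ℕ) (r : ℕ → ℕ → α) (w : ℕ → α) : Prop :=
  ∀ t, (∀ i, 1 ≤ i → i < N → r (t + 1) i = r t (i + 1)) ∧ r (t + 1) N = w t

namespace IsShiftRegister

variable {α : Type*} {N : ℕ} {r : ℕ → ℕ → α} {w : ℕ → α}

theorem apply_add (hr : IsShiftRegister N r w) {i : ℕ} (hi : 1 ≤ i) (s : ℕ) :
    ∀ {k}, i + k ≤ N → r (s + k) i = r s (k + i)
  | 0, _ => by simp
  | k + 1, hk => by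
    rw [← add_assoc, (hr (s + k)).1 i hi (by omega), apply_add hr (Nat.le_succ_of_le hi) s
      (by omega)]
    congr 1
    omega

theorem head_of_lt (hr : IsShiftRegister N r w) (s : ℕ) {k : ℕ} (hk : k < N) :
    r (s + k) 1 = r s (k + 1) :=
  hr.apply_add le_rfl s (by omega)

theorem head_of_le (hr : IsShiftRegister N r w) (hN : 1 ≤ N) (s : ℕ) {k : ℕ} (hk : N ≤ k) :
    r (s + k) 1 = w (s + k - N) := by
  rw [show s + k = s + k - N + 1 + (N - 1) by omega, hr.head_of_lt _ (by omega),
    Nat.sub_add_cancel hN, (hr _).2]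
  congr 1
  omega

end IsShiftRegister

namespace IsPrevTraj

variable {n m k₀ l τ p : ℕ} {A : Matrix (Fin n) (Fin n) ℝ} {B : Matrix (Fin n) (Fin m) ℝ}
  {F₀ : Matrix (Fin n) (Fin k₀) ℝ} {Fp : Matrix (Fin n) (Fin l) ℝ} {x : ℕ → Fin n → ℝ}
  {uu : ℕ → ℕ → Fin m → ℝ} {dd : ℕ → ℕ → Fin l → ℝ} {u : ℕ → Fin m → ℝ}
  {d₀ : ℕ → Fin k₀ → ℝ} {df : ℕ → Fin l → ℝ}

theorem isShiftRegister_input (h : IsPrevTraj τ p A B F₀ Fp x uu dd u d₀ df) :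
    IsShiftRegister τ uu u :=
  fun t => ⟨(h t).2.1, (h t).2.2.1⟩

theorem isShiftRegister_preview (h : IsPrevTraj τ p A B F₀ Fp x uu dd u d₀ df) :
    IsShiftRegister p dd df :=
  fun t => ⟨(h t).2.2.2.1, (h t).2.2.2.2⟩

theorem state_eq (h : IsPrevTraj τ p A B F₀ Fp x uu dd u d₀ df) (t s : ℕ) :
    x (t + s) = A ^ s *ᵥ x t
      + ∑ j ∈ Icc 1 s, A ^ (j - 1) *ᵥ B *ᵥ uu (t + s - j) 1
      + ∑ j ∈ Icc 1 s, A ^ (j - 1) *ᵥ F₀ *ᵥ d₀ (t + s - j)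
      + ∑ j ∈ Icc 1 s, A ^ (j - 1) *ᵥ Fp *ᵥ dd (t + s - j) 1 := by
  rw [A.eq_pow_mulVec_add_sum_of_recurrence (x := x)
    (w := fun s => B *ᵥ uu s 1 + F₀ *ᵥ d₀ s + Fp *ᵥ dd s 1) (fun t => (h t).1.trans (by abel)) t s]
  simp only [mulVec_add, sum_add_distrib, add_assoc]

theorem input_sum_eq (h : IsPrevTraj τ p A B F₀ Fp x uu dd u d₀ df) (t : ℕ) :
    ∑ j ∈ Icc 1 τ, A ^ (j - 1) *ᵥ B *ᵥ uu (t + τ - j) 1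
      = ∑ j ∈ Icc 1 τ, A ^ (j - 1) *ᵥ B *ᵥ uu t (τ - j + 1) :=
  sum_congr rfl fun j hj => by
    rw [mem_Icc] at hj
    rw [Nat.add_sub_assoc hj.2, h.isShiftRegister_input.head_of_lt t (by omega)]

theorem preview_sum_eq (h : IsPrevTraj τ p A B F₀ Fp x uu dd u d₀ df) (hp1 : 1 ≤ p)
    (hpτ : p ≤ τ) (t : ℕ) :
    ∑ j ∈ Icc 1 τ, A ^ (j - 1) *ᵥ Fp *ᵥ dd (t + τ - j) 1
      = ∑ j ∈ Icc 1 (τ - p), A ^ (j - 1) *ᵥ Fp *ᵥ df (t + τ - p - j)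
        + ∑ j ∈ Icc (τ - p + 1) τ, A ^ (j - 1) *ᵥ Fp *ᵥ dd t (τ - j + 1) := by
  have hreg := h.isShiftRegister_preview
  rw [show Icc 1 τ = Ioc 0 τ from Icc_add_one_left_eq_Ioc 0 τ,
    show Icc 1 (τ - p) = Ioc 0 (τ - p) from Icc_add_one_left_eq_Ioc 0 (τ - p),
    Icc_add_one_left_eq_Ioc, ← sum_Ioc_consecutive _ (Nat.zero_le _) (Nat.sub_le τ p)]
  congr 1 <;> refine sum_congr rfl fun j hj => ?_ <;> rw [mem_Ioc] at hj <;>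
    rw [Nat.add_sub_assoc (by omega)]
  · rw [hreg.head_of_le hp1 t (by omega)]
    congr 3
    omega
  · rw [hreg.head_of_lt t (by omega)]

theorem sub_xhatP_eq (h : IsPrevTraj τ p A B F₀ Fp x uu dd u d₀ df) (hp1 : 1 ≤ p)
    (hpτ : p ≤ τ) (t : ℕ) :
    x (t + τ) - xhatP τ p A B Fp x uu dd t
      = ∑ j ∈ Icc 1 τ, A ^ (j - 1) *ᵥ F₀ *ᵥ d₀ (t + τ - j)
        + ∑ j ∈ Icc 1 (τ - p), A ^ (j - 1) *ᵥ Fp *ᵥ df (t + τ - p - j) := by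
  rw [h.state_eq, h.input_sum_eq, h.preview_sum_eq hp1 hpτ, xhatP]
  abel

end IsPrevTraj

theorem sum_mem_ESet {n k₀ l : ℕ} (A : Matrix (Fin n) (Fin n) ℝ) (F₀ : Matrix (Fin n) (Fin k₀) ℝ)
    (Fp : Matrix (Fin n) (Fin l) ℝ) {D₀ : Set (Fin k₀ → ℝ)} {Dp : Set (Fin l → ℝ)} {a b : ℕ}
    {d : ℕ → Fin k₀ → ℝ} {δ : ℕ → Fin l → ℝ} (hd : ∀ j ∈ Icc 1 a, d j ∈ D₀)
    (hδ : ∀ j ∈ Icc 1 b, δ j ∈ Dp) :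
    ∑ j ∈ Icc 1 a, A ^ (j - 1) *ᵥ F₀ *ᵥ d j + ∑ j ∈ Icc 1 b, A ^ (j - 1) *ᵥ Fp *ᵥ δ j
      ∈ ESet A F₀ Fp D₀ Dp a b :=
  Set.add_mem_add (Set.finsetSum_mem_finsetSum _ _ _ fun j hj => ⟨d j, hd j hj, rfl⟩)
    (Set.finsetSum_mem_finsetSum _ _ _ fun j hj => ⟨δ j, hδ j hj, rfl⟩)

theorem mem_of_mem_minkDiff {n : ℕ} {S₁ S₂ : Set (Fin n → ℝ)} {a b : Fin n → ℝ}
    (ha : a ∈ minkDiff S₁ S₂) (hb : b - a ∈ S₂) : b ∈ S₁ := by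
  simpa using ha _ hb

theorem prev_prediction_error_bound_general (n m k₀ l : ℕ) (τ p : ℕ) (hp1 : 1 ≤ p) (hpτ : p ≤ τ)
    (A : Matrix (Fin n) (Fin n) ℝ) (B : Matrix (Fin n) (Fin m) ℝ)
    (F₀ : Matrix (Fin n) (Fin k₀) ℝ) (Fp : Matrix (Fin n) (Fin l) ℝ)
    (D₀ : Set (Fin k₀ → ℝ)) (Dp : Set (Fin l → ℝ)) (X : Set (Fin n → ℝ))
    (x : ℕ → Fin n → ℝ) (uu : ℕ → ℕ → Fin m → ℝ) (dd : ℕ → ℕ → Fin l → ℝ)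
    (u : ℕ → Fin m → ℝ) (d₀ : ℕ → Fin k₀ → ℝ) (df : ℕ → Fin l → ℝ)
    (htraj : IsPrevTraj τ p A B F₀ Fp x uu dd u d₀ df)
    (hd₀ : ∀ s : ℕ, d₀ s ∈ D₀) (hdf : ∀ s : ℕ, df s ∈ Dp) :
    ∀ t : ℕ,
      x (t + τ) - xhatP τ p A B Fp x uu dd t ∈ ESet A F₀ Fp D₀ Dp τ (τ - p) ∧
      (xhatP τ p A B Fp x uu dd t ∈ minkDiff X (ESet A F₀ Fp D₀ Dp τ (τ - p)) →
        x (t + τ) ∈ X) := by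
  intro t
  have herr : x (t + τ) - xhatP τ p A B Fp x uu dd t ∈ ESet A F₀ Fp D₀ Dp τ (τ - p) := by
    rw [htraj.sub_xhatP_eq hp1 hpτ t]
    exact sum_mem_ESet A F₀ Fp (fun _ _ => hd₀ _) (fun _ _ => hdf _)
  exact ⟨herr, fun hX => mem_of_mem_minkDiff hX herr⟩

/-- (Prediction error bound, preview case) For any trajectory of `Σ_aug^prev` with
`d₀(s) ∈ D₀` and `δ_f(s) ∈ D_p` for all `s`, and any `t ≥ 0`,
`x(t+τ) - x̂_τ(t) ∈ (A⁰F₀D₀ ⊕ ⋯ ⊕ A^{τ-1}F₀D₀) ⊕ (A⁰F_pD_p ⊕ ⋯ ⊕ A^{τ-p-1}F_pD_p)`;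
consequently, if `x̂_τ(t) ∈ X̂`, then `x(t+τ) ∈ X`. -/
theorem prev_prediction_error_bound (n m k₀ l : ℕ) (hn : 0 < n) (hm : 0 < m) (hk : 0 < k₀)
    (hl : 0 < l) (τ p : ℕ) (hτ : 1 ≤ τ) (hp1 : 1 ≤ p) (hpτ : p ≤ τ)
    (A : Matrix (Fin n) (Fin n) ℝ) (B : Matrix (Fin n) (Fin m) ℝ)
    (F₀ : Matrix (Fin n) (Fin k₀) ℝ) (Fp : Matrix (Fin n) (Fin l) ℝ)
    (D₀ : Set (Fin k₀ → ℝ)) (Dp : Set (Fin l → ℝ)) (X : Set (Fin n → ℝ))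
    (x : ℕ → Fin n → ℝ) (uu : ℕ → ℕ → Fin m → ℝ) (dd : ℕ → ℕ → Fin l → ℝ)
    (u : ℕ → Fin m → ℝ) (d₀ : ℕ → Fin k₀ → ℝ) (df : ℕ → Fin l → ℝ)
    (htraj : IsPrevTraj τ p A B F₀ Fp x uu dd u d₀ df)
    (hd₀ : ∀ s : ℕ, d₀ s ∈ D₀) (hdf : ∀ s : ℕ, df s ∈ Dp) :
    ∀ t : ℕ,
      x (t + τ) - xhatP τ p A B Fp x uu dd t ∈ ESet A F₀ Fp D₀ Dp τ (τ - p) ∧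
      (xhatP τ p A B Fp x uu dd t ∈ minkDiff X (ESet A F₀ Fp D₀ Dp τ (τ - p)) →
        x (t + τ) ∈ X) :=
  prev_prediction_error_bound_general n m k₀ l τ p hp1 hpτ A B F₀ Fp D₀ Dp X x uu dd u d₀ df htraj
    hd₀ hdf
end

section
/- (Corollary 2) If Ĉ_p ⊆ ℝ^n is controlled invariant within X̂ for the auxiliary system Σ_aux^prev, then C_{p,ext} is controlled invariant within S_p for the augmented system Σ_aug^prev. -/
open Pointwise

/-- The transition map of the augmented preview system `Σ_aug^prev` on states
`z = (x, (u₁, …, u_τ), (δ₁, …, δ_p)) ∈ ℝⁿ × (ℝᵐ)^τ × (ℝˡ)^p`: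
`g_p(z, u, d₀, δ_f) = (A x + B u₁ + F₀ d₀ + F_p δ₁, u₂, …, u_τ, u, δ₂, …, δ_p, δ_f)`. -/
def gAugP {n m k₀ l : ℕ} (τ p : ℕ) (hτ : 0 < τ) (hp : 0 < p)
    (A : Matrix (Fin n) (Fin n) ℝ) (B : Matrix (Fin n) (Fin m) ℝ)
    (F₀ : Matrix (Fin n) (Fin k₀) ℝ) (Fp : Matrix (Fin n) (Fin l) ℝ)
    (z : (Fin n → ℝ) × (Fin τ → Fin m → ℝ) × (Fin p → Fin l → ℝ))
    (u : Fin m → ℝ) (d₀ : Fin k₀ → ℝ) (δf : Fin l → ℝ) :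
    (Fin n → ℝ) × (Fin τ → Fin m → ℝ) × (Fin p → Fin l → ℝ) :=
  (A.mulVec z.1 + B.mulVec (z.2.1 ⟨0, hτ⟩) + F₀.mulVec d₀ + Fp.mulVec (z.2.2 ⟨0, hp⟩),
    fun i => if h : (i : ℕ) + 1 < τ then z.2.1 ⟨(i : ℕ) + 1, h⟩ else u,
    fun j => if h : (j : ℕ) + 1 < p then z.2.2 ⟨(j : ℕ) + 1, h⟩ else δf)

/-- The safe set `S_p = X × U^τ × D_p^p` of `Σ_aug^prev`. -/
def safeAugP {n m l : ℕ} (τ p : ℕ) (U : Set (Fin m → ℝ)) (Dp : Set (Fin l → ℝ))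
    (X : Set (Fin n → ℝ)) :
    Set ((Fin n → ℝ) × (Fin τ → Fin m → ℝ) × (Fin p → Fin l → ℝ)) :=
  {z | z.1 ∈ X ∧ (∀ i : Fin τ, z.2.1 i ∈ U) ∧ ∀ j : Fin p, z.2.2 j ∈ Dp}

/-- `C` is controlled invariant within `S_p` for the augmented preview system. -/
def CtrlInvAugP {n m k₀ l : ℕ} (τ p : ℕ) (hτ : 0 < τ) (hp : 0 < p)
    (A : Matrix (Fin n) (Fin n) ℝ) (B : Matrix (Fin n) (Fin m) ℝ)
    (F₀ : Matrix (Fin n) (Fin k₀) ℝ) (Fp : Matrix (Fin n) (Fin l) ℝ)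
    (U : Set (Fin m → ℝ)) (D₀ : Set (Fin k₀ → ℝ)) (Dp : Set (Fin l → ℝ))
    (X : Set (Fin n → ℝ))
    (C : Set ((Fin n → ℝ) × (Fin τ → Fin m → ℝ) × (Fin p → Fin l → ℝ))) : Prop :=
  C ⊆ safeAugP τ p U Dp X ∧
    ∀ z ∈ C, ∃ u ∈ U, ∀ d₀ ∈ D₀, ∀ δf ∈ Dp, gAugP τ p hτ hp A B F₀ Fp z u d₀ δf ∈ C

/-- The transition map of the auxiliary preview system `Σ_aux^prev`:
`f̂_p(x̂, u, d₀, δ_f) = A x̂ + B u + A^τ F₀ d₀ + A^{τ-p} F_p δ_f`. -/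
def fAuxP {n m k₀ l : ℕ} (τ p : ℕ) (A : Matrix (Fin n) (Fin n) ℝ)
    (B : Matrix (Fin n) (Fin m) ℝ) (F₀ : Matrix (Fin n) (Fin k₀) ℝ)
    (Fp : Matrix (Fin n) (Fin l) ℝ) (xh : Fin n → ℝ) (u : Fin m → ℝ)
    (d₀ : Fin k₀ → ℝ) (δf : Fin l → ℝ) : Fin n → ℝ :=
  A.mulVec xh + B.mulVec u + (A ^ τ).mulVec (F₀.mulVec d₀) +
    (A ^ (τ - p)).mulVec (Fp.mulVec δf)

/-- `Ĉ_p` is controlled invariant within `X̂ = X ⊖ (⋯)` for `Σ_aux^prev`. -/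
def CtrlInvAuxP {n m k₀ l : ℕ} (τ p : ℕ) (A : Matrix (Fin n) (Fin n) ℝ)
    (B : Matrix (Fin n) (Fin m) ℝ) (F₀ : Matrix (Fin n) (Fin k₀) ℝ)
    (Fp : Matrix (Fin n) (Fin l) ℝ) (U : Set (Fin m → ℝ)) (D₀ : Set (Fin k₀ → ℝ))
    (Dp : Set (Fin l → ℝ)) (X : Set (Fin n → ℝ)) (Chp : Set (Fin n → ℝ)) : Prop :=
  Chp ⊆ minkDiff X (ESet A F₀ Fp D₀ Dp τ (τ - p)) ∧
    ∀ xh ∈ Chp, ∃ u ∈ U, ∀ d₀ ∈ D₀, ∀ δf ∈ Dp, fAuxP τ p A B F₀ Fp xh u d₀ δf ∈ Chp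

/-- The prediction map on augmented preview states:
`x̂_τ(z) = A^τ x + Σ_{i=1}^{τ} A^{i-1} B u_{τ-i+1} + Σ_{j=τ-p+1}^{τ} A^{j-1} F_p δ_{τ-j+1}`
(written with 0-based indices `q = τ - i` and `r = τ - j`). -/
def predMapP {n m l : ℕ} (τ p : ℕ) (A : Matrix (Fin n) (Fin n) ℝ)
    (B : Matrix (Fin n) (Fin m) ℝ) (Fp : Matrix (Fin n) (Fin l) ℝ)
    (z : (Fin n → ℝ) × (Fin τ → Fin m → ℝ) × (Fin p → Fin l → ℝ)) : Fin n → ℝ :=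
  (A ^ τ).mulVec z.1 +
    (∑ q : Fin τ, (A ^ (τ - 1 - (q : ℕ))).mulVec (B.mulVec (z.2.1 q))) +
    ∑ r : Fin p, (A ^ (τ - 1 - (r : ℕ))).mulVec (Fp.mulVec (z.2.2 r))

/-- `C_{p,τ} = {z : x̂_τ(z) ∈ Ĉ_p}`. -/
def CpTau {n m l : ℕ} (τ p : ℕ) (A : Matrix (Fin n) (Fin n) ℝ)
    (B : Matrix (Fin n) (Fin m) ℝ) (Fp : Matrix (Fin n) (Fin l) ℝ)
    (Chp : Set (Fin n → ℝ)) :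
    Set ((Fin n → ℝ) × (Fin τ → Fin m → ℝ) × (Fin p → Fin l → ℝ)) :=
  {z | predMapP τ p A B Fp z ∈ Chp}

/-- For `0 ≤ j ≤ τ-1`, the set
`C_{p,j} = {z : A^j x + Σ_{i=1}^{j} A^{i-1} B u_{j-i+1}
+ Σ_{i=max(1,j-p+1)}^{j} A^{i-1} F_p δ_{j-i+1}
∈ X ⊖ ((A⁰F₀D₀ ⊕ ⋯ ⊕ A^{j-1}F₀D₀) ⊕ (A⁰F_pD_p ⊕ ⋯ ⊕ A^{j-p-1}F_pD_p))}`
(written with 0-based indices; only indices `< j` contribute). -/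
def CpJ {n m k₀ l : ℕ} (τ p : ℕ) (A : Matrix (Fin n) (Fin n) ℝ)
    (B : Matrix (Fin n) (Fin m) ℝ) (F₀ : Matrix (Fin n) (Fin k₀) ℝ)
    (Fp : Matrix (Fin n) (Fin l) ℝ) (D₀ : Set (Fin k₀ → ℝ)) (Dp : Set (Fin l → ℝ))
    (X : Set (Fin n → ℝ)) (j : ℕ) :
    Set ((Fin n → ℝ) × (Fin τ → Fin m → ℝ) × (Fin p → Fin l → ℝ)) :=
  {z | (A ^ j).mulVec z.1 +
        (∑ q : Fin τ, if (q : ℕ) < j then (A ^ (j - 1 - (q : ℕ))).mulVec (B.mulVec (z.2.1 q))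
          else 0) +
        (∑ r : Fin p, if (r : ℕ) < j then (A ^ (j - 1 - (r : ℕ))).mulVec (Fp.mulVec (z.2.2 r))
          else 0) ∈ minkDiff X (ESet A F₀ Fp D₀ Dp j (j - p))}

/-- `C_{p,ext} = C_{p,0} ∩ ⋯ ∩ C_{p,τ-1} ∩ C_{p,τ} ∩ S_p`. -/
def CpExt {n m k₀ l : ℕ} (τ p : ℕ) (A : Matrix (Fin n) (Fin n) ℝ)
    (B : Matrix (Fin n) (Fin m) ℝ) (F₀ : Matrix (Fin n) (Fin k₀) ℝ)
    (Fp : Matrix (Fin n) (Fin l) ℝ) (U : Set (Fin m → ℝ)) (D₀ : Set (Fin k₀ → ℝ))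
    (Dp : Set (Fin l → ℝ)) (X : Set (Fin n → ℝ)) (Chp : Set (Fin n → ℝ)) :
    Set ((Fin n → ℝ) × (Fin τ → Fin m → ℝ) × (Fin p → Fin l → ℝ)) :=
  (⋂ j ∈ Finset.range τ, CpJ τ p A B F₀ Fp D₀ Dp X j) ∩ CpTau τ p A B Fp Chp ∩
    safeAugP τ p U Dp X


/-!
Everything is driven by the nominal prediction
`y_j(z) = A^j x + Σ_{k<j} A^{j-1-k} (B u_k + F_p δ_k)`, with buffer entries beyond the
buffers read as zero. Then `x̂_τ(z) = y_τ(z)`, and `C_{p,j}` is the constraint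
`y_j(z) ∈ X ⊖ E_j` with `E_j = (A⁰F₀D₀ ⊕ ⋯ ⊕ A^{j-1}F₀D₀) ⊕ (A⁰F_pD_p ⊕ ⋯ ⊕ A^{j-p-1}F_pD_p)`.
One step of `Σ_aug^prev` shifts the buffers, which gives
`y_j(g_p(z, u, d₀, δ_f)) = y_{j+1}(z) + A^j F₀ d₀ + [τ ≤ j] A^{j-τ} B u + [p ≤ j] A^{j-p} F_p δ_f`.
For `j < τ` the new terms lie in the increment from `E_j` to `E_{j+1}`, so the constraint of
`C_{p,j+1}` (of `Ĉ_p ⊆ X̂` when `j + 1 = τ`) yields that of `C_{p,j}` for the successor.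
For `j = τ`, since `p ≤ τ` gives `y_{τ+1} = A y_τ`, the identity is exactly the auxiliary
dynamics `x̂_τ(g_p(z, u, d₀, δ_f)) = f̂_p(x̂_τ(z), u, d₀, δ_f)`, so an input that keeps `Ĉ_p`
invariant from `x̂_τ(z)` keeps the successor in `C_{p,τ}`.
-/
open scoped Matrix

section ExtendByZero

variable {α : Type*} {N : ℕ}

def extendByZero [Zero α] (w : Fin N → α) (k : ℕ) : α :=
  if h : k < N then w ⟨k, h⟩ else 0

@[simp]
lemma extendByZero_val [Zero α] (w : Fin N → α) (i : Fin N) : extendByZero w i = w i :=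
  dif_pos i.isLt

lemma extendByZero_of_le [Zero α] (w : Fin N → α) {k : ℕ} (hk : N ≤ k) :
    extendByZero w k = 0 :=
  dif_neg hk.not_gt

lemma extendByZero_shift_snoc [AddMonoid α] (hN : 0 < N) (w : Fin N → α) (a : α) :
    extendByZero (fun i : Fin N => if h : (i : ℕ) + 1 < N then w ⟨i + 1, h⟩ else a) =
      (fun k => extendByZero w (k + 1)) + Pi.single (N - 1) a := by
  funext k
  simp only [extendByZero, Pi.add_apply, Pi.single_apply]
  by_cases hk : k + 1 < N
  · simp [hk, show k < N by omega, show k ≠ N - 1 by omega]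
  · by_cases hkN : k = N - 1
    · subst hkN
      simp [show ¬N - 1 + 1 < N by omega, hN.ne']
    · simp [hk, hkN, show ¬k < N by omega]

end ExtendByZero

section ConvSum

variable {R ι κ : Type*} [Semiring R] [Fintype ι] [DecidableEq ι] [Fintype κ]
  (A : Matrix ι ι R) (M : Matrix ι κ R)

def convSum (w : ℕ → κ → R) (j : ℕ) : ι → R :=
  ∑ k ∈ Finset.range j, A ^ (j - 1 - k) *ᵥ M *ᵥ w k

@[simp]
lemma convSum_zero (w : ℕ → κ → R) : convSum A M w 0 = 0 := by
  simp [convSum]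

lemma convSum_add (w w' : ℕ → κ → R) (j : ℕ) :
    convSum A M (w + w') j = convSum A M w j + convSum A M w' j := by
  simp only [convSum, Pi.add_apply, Matrix.mulVec_add, Finset.sum_add_distrib]

lemma convSum_single (i : ℕ) (a : κ → R) (j : ℕ) :
    convSum A M (Pi.single i a) j = if i < j then A ^ (j - 1 - i) *ᵥ M *ᵥ a else 0 := by
  simp only [convSum, Pi.single_apply]
  split_ifs with hij
  · rw [Finset.sum_eq_single_of_mem i (Finset.mem_range.2 hij) fun k _ hki => by simp [hki]]
    simp
  · exact Finset.sum_eq_zero fun k hk => by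
      simp [show k ≠ i by have := Finset.mem_range.1 hk; omega]

lemma convSum_succ (w : ℕ → κ → R) (j : ℕ) :
    convSum A M w (j + 1) = A *ᵥ convSum A M w j + M *ᵥ w j := by
  simp only [convSum, Finset.sum_range_succ, Matrix.mulVec_sum, Nat.add_sub_cancel,
    Nat.sub_self, pow_zero, Matrix.one_mulVec]
  congr 1
  refine Finset.sum_congr rfl fun k hk => ?_
  have hkj := Finset.mem_range.1 hk
  rw [Matrix.mulVec_mulVec (M *ᵥ w k) A, ← pow_succ', show j - 1 - k + 1 = j - k by omega]

lemma convSum_succ_shift (w : ℕ → κ → R) (j : ℕ) :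
    convSum A M w (j + 1) = A ^ j *ᵥ M *ᵥ w 0 + convSum A M (fun k => w (k + 1)) j := by
  simp only [convSum, Finset.sum_range_succ', Nat.add_sub_cancel, Nat.sub_zero]
  rw [add_comm]
  congr 1
  exact Finset.sum_congr rfl fun k _ => by rw [Nat.sub_sub, Nat.add_comm 1 k]

lemma sum_fin_ite_eq_convSum {N : ℕ} (w : Fin N → κ → R) (j : ℕ) :
    (∑ q : Fin N, if (q : ℕ) < j then A ^ (j - 1 - q) *ᵥ M *ᵥ w q else 0) =
      convSum A M (extendByZero w) j := by
  set F : ℕ → ι → R := fun k => A ^ (j - 1 - k) *ᵥ M *ᵥ extendByZero w k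
  have hF : ∀ k ∈ Finset.range j, F k ≠ 0 → k < N := fun k _ hk => by
    by_contra hNk
    simp [F, extendByZero_of_le w (not_lt.1 hNk)] at hk
  calc (∑ q : Fin N, if (q : ℕ) < j then A ^ (j - 1 - q) *ᵥ M *ᵥ w q else 0)
      = ∑ k ∈ Finset.range N, if k < j then F k else 0 := by
        rw [← Fin.sum_univ_eq_sum_range]; simp [F]
    _ = ∑ k ∈ (Finset.range j).filter (· < N), F k := by
        rw [← Finset.sum_filter]
        congr 1
        ext k
        simp only [Finset.mem_filter, Finset.mem_range]
        omega
    _ = convSum A M (extendByZero w) j := Finset.sum_filter_of_ne hF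

end ConvSum

section MinkowskiDifference

variable {n : ℕ} {S T T' : Set (Fin n → ℝ)} {x v : Fin n → ℝ}

lemma mem_of_mem_minkDiff_s17 (hx : x ∈ minkDiff S T) (h0 : 0 ∈ T) : x ∈ S := by
  simpa using hx 0 h0

lemma add_mem_minkDiff (hx : x ∈ minkDiff S T) (hv : ∀ e ∈ T', v + e ∈ T) :
    x + v ∈ minkDiff S T' := fun e he => by
  rw [add_assoc]
  exact hx _ (hv e he)

end MinkowskiDifference

lemma add_mem_sum_Icc_succ {V : Type*} [AddCommMonoid V] (f : ℕ → Set V) {a : ℕ} {v e : V}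
    (hv : v ∈ f (a + 1)) (he : e ∈ ∑ i ∈ Finset.Icc 1 a, f i) :
    v + e ∈ ∑ i ∈ Finset.Icc 1 (a + 1), f i := by
  rw [Finset.sum_Icc_succ_top (Nat.le_add_left 1 a), add_comm]
  exact Set.add_mem_add hv he

section DisturbanceSet

variable {n k₀ l : ℕ} (A : Matrix (Fin n) (Fin n) ℝ) (F₀ : Matrix (Fin n) (Fin k₀) ℝ)
  (Fp : Matrix (Fin n) (Fin l) ℝ) {D₀ : Set (Fin k₀ → ℝ)} {Dp : Set (Fin l → ℝ)}

lemma zero_mem_ESet_zero : 0 ∈ ESet A F₀ Fp D₀ Dp 0 0 := by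
  simp [ESet]

lemma add_mem_ESet_succ_left {a b : ℕ} {d e} (hd : d ∈ D₀) (he : e ∈ ESet A F₀ Fp D₀ Dp a b) :
    A ^ a *ᵥ F₀ *ᵥ d + e ∈ ESet A F₀ Fp D₀ Dp (a + 1) b := by
  obtain ⟨e₀, he₀, e₁, he₁, rfl⟩ := he
  rw [← add_assoc]
  exact Set.add_mem_add (add_mem_sum_Icc_succ _ ⟨d, hd, rfl⟩ he₀) he₁

lemma add_mem_ESet_succ_right {a b : ℕ} {δ e} (hδ : δ ∈ Dp) (he : e ∈ ESet A F₀ Fp D₀ Dp a b) :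
    A ^ b *ᵥ Fp *ᵥ δ + e ∈ ESet A F₀ Fp D₀ Dp a (b + 1) := by
  obtain ⟨e₀, he₀, e₁, he₁, rfl⟩ := he
  rw [add_left_comm]
  exact Set.add_mem_add he₀ (add_mem_sum_Icc_succ _ ⟨δ, hδ, rfl⟩ he₁)

lemma add_mem_ESet_succ {j p : ℕ} {d δ e} (hd : d ∈ D₀) (hδ : δ ∈ Dp)
    (he : e ∈ ESet A F₀ Fp D₀ Dp j (j - p)) :
    A ^ j *ᵥ F₀ *ᵥ d + (if p ≤ j then A ^ (j - p) *ᵥ Fp *ᵥ δ else 0) + e ∈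
      ESet A F₀ Fp D₀ Dp (j + 1) (j + 1 - p) := by
  rw [add_assoc]
  refine add_mem_ESet_succ_left A F₀ Fp hd ?_
  split_ifs with hpj
  · rw [show j + 1 - p = j - p + 1 by omega]
    exact add_mem_ESet_succ_right A F₀ Fp hδ he
  · rwa [zero_add, show j + 1 - p = j - p by omega]

end DisturbanceSet

section NominalPrediction

variable {n m k₀ l τ p : ℕ} (A : Matrix (Fin n) (Fin n) ℝ) (B : Matrix (Fin n) (Fin m) ℝ)
  (F₀ : Matrix (Fin n) (Fin k₀) ℝ) (Fp : Matrix (Fin n) (Fin l) ℝ)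

def nominalPrediction (z : (Fin n → ℝ) × (Fin τ → Fin m → ℝ) × (Fin p → Fin l → ℝ))
    (j : ℕ) : Fin n → ℝ :=
  A ^ j *ᵥ z.1 + convSum A B (extendByZero z.2.1) j + convSum A Fp (extendByZero z.2.2) j

variable (z : (Fin n → ℝ) × (Fin τ → Fin m → ℝ) × (Fin p → Fin l → ℝ))

@[simp]
lemma nominalPrediction_zero : nominalPrediction A B Fp z 0 = z.1 := by
  simp [nominalPrediction]

lemma mem_CpJ_iff (D₀ : Set (Fin k₀ → ℝ)) (Dp : Set (Fin l → ℝ)) (X : Set (Fin n → ℝ))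
    (j : ℕ) :
    z ∈ CpJ τ p A B F₀ Fp D₀ Dp X j ↔
      nominalPrediction A B Fp z j ∈ minkDiff X (ESet A F₀ Fp D₀ Dp j (j - p)) := by
  simp only [CpJ, Set.mem_ofPred_eq, sum_fin_ite_eq_convSum, nominalPrediction]

lemma mem_of_mem_CpJ_zero {D₀ : Set (Fin k₀ → ℝ)} {Dp : Set (Fin l → ℝ)}
    {X : Set (Fin n → ℝ)} (hz : z ∈ CpJ τ p A B F₀ Fp D₀ Dp X 0) : z.1 ∈ X := by
  rw [mem_CpJ_iff, Nat.zero_sub, nominalPrediction_zero] at hz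
  exact mem_of_mem_minkDiff_s17 hz (zero_mem_ESet_zero A F₀ Fp)

lemma predMapP_eq_nominalPrediction (hpτ : p ≤ τ) :
    predMapP τ p A B Fp z = nominalPrediction A B Fp z τ := by
  have hr : ∀ r : Fin p, (r : ℕ) < τ := fun r => r.isLt.trans_le hpτ
  simp only [predMapP, nominalPrediction, ← sum_fin_ite_eq_convSum, Fin.is_lt, hr, if_true]

lemma nominalPrediction_gAugP (hτ : 0 < τ) (hp : 0 < p) (u : Fin m → ℝ) (d₀ : Fin k₀ → ℝ)
    (δf : Fin l → ℝ) (j : ℕ) :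
    nominalPrediction A B Fp (gAugP τ p hτ hp A B F₀ Fp z u d₀ δf) j =
      nominalPrediction A B Fp z (j + 1) + A ^ j *ᵥ F₀ *ᵥ d₀ +
        (if τ ≤ j then A ^ (j - τ) *ᵥ B *ᵥ u else 0) +
        (if p ≤ j then A ^ (j - p) *ᵥ Fp *ᵥ δf else 0) := by
  have hu₀ : extendByZero z.2.1 0 = z.2.1 ⟨0, hτ⟩ := extendByZero_val _ ⟨0, hτ⟩
  have hδ₀ : extendByZero z.2.2 0 = z.2.2 ⟨0, hp⟩ := extendByZero_val _ ⟨0, hp⟩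
  have hτj : τ - 1 < j ↔ τ ≤ j := by omega
  have hpj : p - 1 < j ↔ p ≤ j := by omega
  simp only [nominalPrediction, gAugP, extendByZero_shift_snoc hτ, extendByZero_shift_snoc hp,
    convSum_add, convSum_single, convSum_succ_shift, hu₀, hδ₀, hτj, hpj,
    show j - 1 - (τ - 1) = j - τ by omega, show j - 1 - (p - 1) = j - p by omega,
    Matrix.mulVec_add, Matrix.mulVec_mulVec, pow_succ]
  abel

lemma nominalPrediction_succ_of_le (hpτ : p ≤ τ) :
    nominalPrediction A B Fp z (τ + 1) = A *ᵥ nominalPrediction A B Fp z τ := by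
  simp only [nominalPrediction, convSum_succ, extendByZero_of_le _ le_rfl,
    extendByZero_of_le _ hpτ, Matrix.mulVec_zero, add_zero, Matrix.mulVec_add,
    Matrix.mulVec_mulVec, pow_succ']

lemma nominalPrediction_gAugP_self (hτ : 0 < τ) (hp : 0 < p) (hpτ : p ≤ τ) (u : Fin m → ℝ)
    (d₀ : Fin k₀ → ℝ) (δf : Fin l → ℝ) :
    nominalPrediction A B Fp (gAugP τ p hτ hp A B F₀ Fp z u d₀ δf) τ =
      fAuxP τ p A B F₀ Fp (nominalPrediction A B Fp z τ) u d₀ δf := by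
  rw [nominalPrediction_gAugP, nominalPrediction_succ_of_le A B Fp z hpτ, if_pos le_rfl,
    if_pos hpτ, Nat.sub_self, pow_zero, Matrix.one_mulVec, fAuxP]
  abel

end NominalPrediction

section AugmentedSystem

variable {n m k₀ l τ p : ℕ} (hτ : 0 < τ) (hp : 0 < p) (A : Matrix (Fin n) (Fin n) ℝ)
  (B : Matrix (Fin n) (Fin m) ℝ) (F₀ : Matrix (Fin n) (Fin k₀) ℝ)
  (Fp : Matrix (Fin n) (Fin l) ℝ) {U : Set (Fin m → ℝ)} {D₀ : Set (Fin k₀ → ℝ)}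
  {Dp : Set (Fin l → ℝ)} {X : Set (Fin n → ℝ)}
  {z : (Fin n → ℝ) × (Fin τ → Fin m → ℝ) × (Fin p → Fin l → ℝ)} {u : Fin m → ℝ}
  {d₀ : Fin k₀ → ℝ} {δf : Fin l → ℝ}

lemma gAugP_mem_CpJ {j : ℕ} (hj : j < τ)
    (hnext : nominalPrediction A B Fp z (j + 1) ∈
      minkDiff X (ESet A F₀ Fp D₀ Dp (j + 1) (j + 1 - p)))
    (hd₀ : d₀ ∈ D₀) (hδf : δf ∈ Dp) :
    gAugP τ p hτ hp A B F₀ Fp z u d₀ δf ∈ CpJ τ p A B F₀ Fp D₀ Dp X j := by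
  rw [mem_CpJ_iff, nominalPrediction_gAugP, if_neg hj.not_ge, add_zero, add_assoc]
  exact add_mem_minkDiff hnext fun e he => add_mem_ESet_succ A F₀ Fp hd₀ hδf he

lemma gAugP_mem_safeAugP (hz : z ∈ safeAugP τ p U Dp X)
    (hx : (gAugP τ p hτ hp A B F₀ Fp z u d₀ δf).1 ∈ X) (hu : u ∈ U) (hδf : δf ∈ Dp) :
    gAugP τ p hτ hp A B F₀ Fp z u d₀ δf ∈ safeAugP τ p U Dp X := by
  refine ⟨hx, fun i => ?_, fun i => ?_⟩ <;> dsimp only [gAugP] <;> split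
  exacts [hz.2.1 _, hu, hz.2.2 _, hδf]

end AugmentedSystem

theorem cpext_ctrlInv_of_auxP_ctrlInv_general (n m k₀ l : ℕ) (τ p : ℕ) (hτ : 1 ≤ τ) (hp1 : 1 ≤ p)
    (hpτ : p ≤ τ)
    (A : Matrix (Fin n) (Fin n) ℝ) (B : Matrix (Fin n) (Fin m) ℝ)
    (F₀ : Matrix (Fin n) (Fin k₀) ℝ) (Fp : Matrix (Fin n) (Fin l) ℝ)
    (U : Set (Fin m → ℝ)) (D₀ : Set (Fin k₀ → ℝ)) (Dp : Set (Fin l → ℝ))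
    (X : Set (Fin n → ℝ)) (Chp : Set (Fin n → ℝ))
    (hChp : CtrlInvAuxP τ p A B F₀ Fp U D₀ Dp X Chp) :
    CtrlInvAugP τ p hτ hp1 A B F₀ Fp U D₀ Dp X (CpExt τ p A B F₀ Fp U D₀ Dp X Chp) := by
  obtain ⟨hChp_safe, hChp_inv⟩ := hChp
  refine ⟨fun z hz => hz.2, ?_⟩
  rintro z ⟨⟨hzJ, hzτ⟩, hzS⟩
  rw [Set.mem_iInter₂] at hzJ
  have hpred : nominalPrediction A B Fp z τ ∈ Chp := by
    rwa [← predMapP_eq_nominalPrediction A B Fp z hpτ]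
  obtain ⟨u, hu, hstep⟩ := hChp_inv _ hpred
  refine ⟨u, hu, fun d₀ hd₀ δf hδf => ?_⟩
  have hJ : ∀ j < τ, gAugP τ p hτ hp1 A B F₀ Fp z u d₀ δf ∈ CpJ τ p A B F₀ Fp D₀ Dp X j := by
    refine fun j hj => gAugP_mem_CpJ hτ hp1 A B F₀ Fp hj ?_ hd₀ hδf
    rcases (Nat.succ_le_of_lt hj).lt_or_eq with hj' | rfl
    · exact (mem_CpJ_iff A B F₀ Fp z D₀ Dp X _).1 (hzJ _ (Finset.mem_range.2 hj'))
    · exact hChp_safe hpred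
  refine ⟨⟨Set.mem_iInter₂.2 fun j hj => hJ j (Finset.mem_range.1 hj), ?_⟩, ?_⟩
  · show predMapP τ p A B Fp _ ∈ Chp
    rw [predMapP_eq_nominalPrediction A B Fp _ hpτ,
      nominalPrediction_gAugP_self A B F₀ Fp z hτ hp1 hpτ]
    exact hstep d₀ hd₀ δf hδf
  · exact gAugP_mem_safeAugP hτ hp1 A B F₀ Fp hzS
      (mem_of_mem_CpJ_zero A B F₀ Fp _ (hJ 0 hτ)) hu hδf

/-- (Corollary 2) If `Ĉ_p` is controlled invariant within `X̂` for the auxiliary system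
`Σ_aux^prev`, then `C_{p,ext}` is controlled invariant within `S_p` for the augmented
system `Σ_aug^prev`. -/
theorem cpext_ctrlInv_of_auxP_ctrlInv (n m k₀ l : ℕ) (hn : 0 < n) (hm : 0 < m)
    (hk : 0 < k₀) (hl : 0 < l) (τ p : ℕ) (hτ : 1 ≤ τ) (hp1 : 1 ≤ p) (hpτ : p ≤ τ)
    (A : Matrix (Fin n) (Fin n) ℝ) (B : Matrix (Fin n) (Fin m) ℝ)
    (F₀ : Matrix (Fin n) (Fin k₀) ℝ) (Fp : Matrix (Fin n) (Fin l) ℝ)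
    (U : Set (Fin m → ℝ)) (D₀ : Set (Fin k₀ → ℝ)) (Dp : Set (Fin l → ℝ))
    (X : Set (Fin n → ℝ)) (Chp : Set (Fin n → ℝ))
    (hChp : CtrlInvAuxP τ p A B F₀ Fp U D₀ Dp X Chp) :
    CtrlInvAugP τ p hτ hp1 A B F₀ Fp U D₀ Dp X (CpExt τ p A B F₀ Fp U D₀ Dp X Chp) :=
  cpext_ctrlInv_of_auxP_ctrlInv_general n m k₀ l τ p hτ hp1 hpτ A B F₀ Fp U D₀ Dp X Chp hChp
end

section
/- (Theorem 2) Suppose Ĉ_p is the maximal controlled invariant set of the auxiliary system Σ_aux^prev within X̂ (i.e., Ĉ_p is controlled invariant within X̂ for Σ_aux^prev and contains every set controlled invariant within X̂ for Σ_aux^prev), and suppose moreover that Ĉ_p = ⋂_{j≥0} V̂_j, where V̂_0 = X̂ and V̂_{j+1} = Pre_p(V̂_j) ∩ X̂ with Pre_p(V) = {x̂ ∈ ℝ^n : ∃ u ∈ U, ∀ d₀ ∈ D₀, ∀ δ_f ∈ D_p, f̂_p(x̂,u,d₀,δ_f) ∈ V}. Then C_{p,ext} is the maximal controlled invariant set of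 the augmented system Σ_aug^prev within S_p: C_{p,ext} is controlled invariant within S_p for Σ_aug^prev, and every set controlled invariant within S_p for Σ_aug^prev is contained in C_{p,ext}. -/
open Pointwise

/-- The fixed-point iteration for the auxiliary preview system `Σ_aux^prev` within `X̂`:
`V̂ 0 = X̂` and `V̂ (j+1) = Pre_p(V̂ j) ∩ X̂`, where
`Pre_p(V) = {x̂ : ∃ u ∈ U, ∀ d₀ ∈ D₀, ∀ δ_f ∈ D_p, f̂_p(x̂,u,d₀,δ_f) ∈ V}`. -/
def VhatAuxP {n m k₀ l : ℕ} (τ p : ℕ) (A : Matrix (Fin n) (Fin n) ℝ)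
    (B : Matrix (Fin n) (Fin m) ℝ) (F₀ : Matrix (Fin n) (Fin k₀) ℝ)
    (Fp : Matrix (Fin n) (Fin l) ℝ) (U : Set (Fin m → ℝ)) (D₀ : Set (Fin k₀ → ℝ))
    (Dp : Set (Fin l → ℝ)) (X : Set (Fin n → ℝ)) : ℕ → Set (Fin n → ℝ)
  | 0 => minkDiff X (ESet A F₀ Fp D₀ Dp τ (τ - p))
  | j + 1 =>
      {xh | ∃ u ∈ U, ∀ d₀ ∈ D₀, ∀ δf ∈ Dp,
          fAuxP τ p A B F₀ Fp xh u d₀ δf ∈ VhatAuxP τ p A B F₀ Fp U D₀ Dp X j} ∩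
        minkDiff X (ESet A F₀ Fp D₀ Dp τ (τ - p))

namespace CpextAux

lemma mulVec_sum {n : ℕ} (M : Matrix (Fin n) (Fin n) ℝ) {β : Type*} (s : Finset β)
    (f : β → Fin n → ℝ) : M.mulVec (∑ i ∈ s, f i) = ∑ i ∈ s, M.mulVec (f i) :=
  map_sum M.mulVecLin f s

lemma sum_ite_lt {N j : ℕ} {V : Type*} [AddCommMonoid V] (f : ℕ → V) :
    (∑ q : Fin N, if (q : ℕ) < j then f (q : ℕ) else 0) =
      ∑ i ∈ Finset.range (min j N), f i := by
  rw [Fin.sum_univ_eq_sum_range (fun i => if i < j then f i else 0) N, ← Finset.sum_filter]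
  congr 1
  ext i
  simp only [Finset.mem_filter, Finset.mem_range, lt_min_iff]
  tauto

/-- totalization of a finite tuple -/
def uvF {N q : ℕ} (w : Fin N → Fin q → ℝ) (i : ℕ) : Fin q → ℝ :=
  if h : i < N then w ⟨i, h⟩ else 0

lemma uvF_val {N q : ℕ} (w : Fin N → Fin q → ℝ) (i : Fin N) : uvF w (i : ℕ) = w i := by
  simp [uvF]

variable {n m k₀ l : ℕ} {τ p : ℕ}

/-- the `C_{p,j}` defining expression -/
def phiJ (A : Matrix (Fin n) (Fin n) ℝ) (B : Matrix (Fin n) (Fin m) ℝ)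
    (Fp : Matrix (Fin n) (Fin l) ℝ) (j : ℕ)
    (z : (Fin n → ℝ) × (Fin τ → Fin m → ℝ) × (Fin p → Fin l → ℝ)) : Fin n → ℝ :=
  (A ^ j).mulVec z.1 +
    (∑ q : Fin τ, if (q : ℕ) < j then (A ^ (j - 1 - (q : ℕ))).mulVec (B.mulVec (z.2.1 q))
      else 0) +
    ∑ r : Fin p, if (r : ℕ) < j then (A ^ (j - 1 - (r : ℕ))).mulVec (Fp.mulVec (z.2.2 r))
      else 0

lemma phiJ_range (A : Matrix (Fin n) (Fin n) ℝ) (B : Matrix (Fin n) (Fin m) ℝ)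
    (Fp : Matrix (Fin n) (Fin l) ℝ) (j : ℕ)
    (z : (Fin n → ℝ) × (Fin τ → Fin m → ℝ) × (Fin p → Fin l → ℝ)) :
    phiJ A B Fp j z =
      (A ^ j).mulVec z.1 +
        (∑ i ∈ Finset.range (min j τ), (A ^ (j - 1 - i)).mulVec (B.mulVec (uvF z.2.1 i))) +
        ∑ i ∈ Finset.range (min j p), (A ^ (j - 1 - i)).mulVec (Fp.mulVec (uvF z.2.2 i)) := by
  unfold phiJ
  congr 1
  · congr 1
    rw [← sum_ite_lt (fun i => (A ^ (j - 1 - i)).mulVec (B.mulVec (uvF z.2.1 i)))]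
    exact Finset.sum_congr rfl fun q _ => by rw [uvF_val]
  · rw [← sum_ite_lt (fun i => (A ^ (j - 1 - i)).mulVec (Fp.mulVec (uvF z.2.2 i)))]
    exact Finset.sum_congr rfl fun q _ => by rw [uvF_val]

lemma predMapP_range (A : Matrix (Fin n) (Fin n) ℝ) (B : Matrix (Fin n) (Fin m) ℝ)
    (Fp : Matrix (Fin n) (Fin l) ℝ)
    (z : (Fin n → ℝ) × (Fin τ → Fin m → ℝ) × (Fin p → Fin l → ℝ)) :
    predMapP τ p A B Fp z =
      (A ^ τ).mulVec z.1 +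
        (∑ i ∈ Finset.range τ, (A ^ (τ - 1 - i)).mulVec (B.mulVec (uvF z.2.1 i))) +
        ∑ i ∈ Finset.range p, (A ^ (τ - 1 - i)).mulVec (Fp.mulVec (uvF z.2.2 i)) := by
  unfold predMapP
  congr 1
  · congr 1
    rw [← Fin.sum_univ_eq_sum_range (fun i => (A ^ (τ - 1 - i)).mulVec (B.mulVec (uvF z.2.1 i)))]
    exact Finset.sum_congr rfl fun q _ => by rw [uvF_val]
  · rw [← Fin.sum_univ_eq_sum_range (fun i => (A ^ (τ - 1 - i)).mulVec (Fp.mulVec (uvF z.2.2 i)))]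
    exact Finset.sum_congr rfl fun q _ => by rw [uvF_val]

lemma phiJ_tau (A : Matrix (Fin n) (Fin n) ℝ) (B : Matrix (Fin n) (Fin m) ℝ)
    (Fp : Matrix (Fin n) (Fin l) ℝ) (hpτ : p ≤ τ)
    (z : (Fin n → ℝ) × (Fin τ → Fin m → ℝ) × (Fin p → Fin l → ℝ)) :
    phiJ A B Fp τ z = predMapP τ p A B Fp z := by
  rw [phiJ_range, predMapP_range, min_self, min_eq_right hpτ]

lemma phiJ_zero (A : Matrix (Fin n) (Fin n) ℝ) (B : Matrix (Fin n) (Fin m) ℝ)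
    (Fp : Matrix (Fin n) (Fin l) ℝ)
    (z : (Fin n → ℝ) × (Fin τ → Fin m → ℝ) × (Fin p → Fin l → ℝ)) :
    phiJ A B Fp 0 z = z.1 := by
  simp [phiJ, Matrix.one_mulVec]


section Step

variable {τ p : ℕ} (hτ0 : 0 < τ) (hp0 : 0 < p)
variable (A : Matrix (Fin n) (Fin n) ℝ) (B : Matrix (Fin n) (Fin m) ℝ)
  (F₀ : Matrix (Fin n) (Fin k₀) ℝ) (Fp : Matrix (Fin n) (Fin l) ℝ)
variable (z : (Fin n → ℝ) × (Fin τ → Fin m → ℝ) × (Fin p → Fin l → ℝ))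
  (u : Fin m → ℝ) (d₀ : Fin k₀ → ℝ) (δf : Fin l → ℝ)

lemma g_fst :
    (gAugP τ p hτ0 hp0 A B F₀ Fp z u d₀ δf).1 =
      A.mulVec z.1 + B.mulVec (uvF z.2.1 0) + F₀.mulVec d₀ + Fp.mulVec (uvF z.2.2 0) := by
  simp [gAugP, uvF, hτ0, hp0]

lemma g_u_mid {i : ℕ} (h1 : i + 1 < τ) :
    uvF (gAugP τ p hτ0 hp0 A B F₀ Fp z u d₀ δf).2.1 i = uvF z.2.1 (i + 1) := by
  simp [gAugP, uvF, h1, Nat.lt_of_succ_lt h1]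

lemma g_u_last {i : ℕ} (hi : i < τ) (h1 : ¬ i + 1 < τ) :
    uvF (gAugP τ p hτ0 hp0 A B F₀ Fp z u d₀ δf).2.1 i = u := by
  simp [gAugP, uvF, hi, h1]

lemma g_d_mid {i : ℕ} (h1 : i + 1 < p) :
    uvF (gAugP τ p hτ0 hp0 A B F₀ Fp z u d₀ δf).2.2 i = uvF z.2.2 (i + 1) := by
  simp [gAugP, uvF, h1, Nat.lt_of_succ_lt h1]

lemma g_d_last {i : ℕ} (hi : i < p) (h1 : ¬ i + 1 < p) :
    uvF (gAugP τ p hτ0 hp0 A B F₀ Fp z u d₀ δf).2.2 i = δf := by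
  simp [gAugP, uvF, hi, h1]

end Step


lemma phiJ_step {τ p : ℕ} (hτ0 : 0 < τ) (hp0 : 0 < p)
    (A : Matrix (Fin n) (Fin n) ℝ) (B : Matrix (Fin n) (Fin m) ℝ)
    (F₀ : Matrix (Fin n) (Fin k₀) ℝ) (Fp : Matrix (Fin n) (Fin l) ℝ)
    (j : ℕ) (hj : j < τ)
    (z : (Fin n → ℝ) × (Fin τ → Fin m → ℝ) × (Fin p → Fin l → ℝ))
    (u : Fin m → ℝ) (d₀ : Fin k₀ → ℝ) (δf : Fin l → ℝ) :
    phiJ A B Fp j (gAugP τ p hτ0 hp0 A B F₀ Fp z u d₀ δf) =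
      phiJ A B Fp (j + 1) z + (A ^ j).mulVec (F₀.mulVec d₀) +
        (if p ≤ j then (A ^ (j - p)).mulVec (Fp.mulVec δf) else 0) := by
  obtain ⟨s, rfl⟩ : ∃ s, p = s + 1 := ⟨p - 1, by omega⟩
  rw [phiJ_range, phiJ_range, g_fst,
    show min j τ = j from by omega, show min (j + 1) τ = j + 1 from by omega,
    Matrix.mulVec_add, Matrix.mulVec_add, Matrix.mulVec_add, Matrix.mulVec_mulVec, ← pow_succ]
  have hU : (∑ i ∈ Finset.range j,
        (A ^ (j - 1 - i)).mulVec
          (B.mulVec (uvF (gAugP τ (s + 1) hτ0 hp0 A B F₀ Fp z u d₀ δf).2.1 i))) =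
      ∑ i ∈ Finset.range j, (A ^ (j + 1 - 1 - (i + 1))).mulVec (B.mulVec (uvF z.2.1 (i + 1))) :=
    Finset.sum_congr rfl fun i hi => by
      have hi' := Finset.mem_range.mp hi
      rw [g_u_mid hτ0 hp0 A B F₀ Fp z u d₀ δf (by omega),
        show j + 1 - 1 - (i + 1) = j - 1 - i from by omega]
  rw [hU, Finset.sum_range_succ'
    (fun i => (A ^ (j + 1 - 1 - i)).mulVec (B.mulVec (uvF z.2.1 i))) j,
    show j + 1 - 1 - 0 = j from by omega]
  by_cases hpj : s + 1 ≤ j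
  · rw [show min j (s + 1) = s + 1 from by omega, show min (j + 1) (s + 1) = s + 1 from by omega,
      if_pos hpj]
    have hD : (∑ i ∈ Finset.range (s + 1),
          (A ^ (j - 1 - i)).mulVec
            (Fp.mulVec (uvF (gAugP τ (s + 1) hτ0 hp0 A B F₀ Fp z u d₀ δf).2.2 i))) =
        (∑ i ∈ Finset.range s,
            (A ^ (j + 1 - 1 - (i + 1))).mulVec (Fp.mulVec (uvF z.2.2 (i + 1)))) +
          (A ^ (j - (s + 1))).mulVec (Fp.mulVec δf) := by
      rw [Finset.sum_range_succ]
      congr 1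
      · exact Finset.sum_congr rfl fun i hi => by
          have hi' := Finset.mem_range.mp hi
          rw [g_d_mid hτ0 hp0 A B F₀ Fp z u d₀ δf (by omega),
            show j + 1 - 1 - (i + 1) = j - 1 - i from by omega]
      · rw [g_d_last hτ0 hp0 A B F₀ Fp z u d₀ δf (by omega) (by omega),
          show j - 1 - s = j - (s + 1) from by omega]
    rw [hD, Finset.sum_range_succ'
      (fun i => (A ^ (j + 1 - 1 - i)).mulVec (Fp.mulVec (uvF z.2.2 i))) s,
      show j + 1 - 1 - 0 = j from by omega]
    abel
  · rw [show min j (s + 1) = j from by omega, show min (j + 1) (s + 1) = j + 1 from by omega,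
      if_neg hpj]
    have hD : (∑ i ∈ Finset.range j,
          (A ^ (j - 1 - i)).mulVec
            (Fp.mulVec (uvF (gAugP τ (s + 1) hτ0 hp0 A B F₀ Fp z u d₀ δf).2.2 i))) =
        ∑ i ∈ Finset.range j, (A ^ (j + 1 - 1 - (i + 1))).mulVec (Fp.mulVec (uvF z.2.2 (i + 1))) :=
      Finset.sum_congr rfl fun i hi => by
        have hi' := Finset.mem_range.mp hi
        rw [g_d_mid hτ0 hp0 A B F₀ Fp z u d₀ δf (by omega),
          show j + 1 - 1 - (i + 1) = j - 1 - i from by omega]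
    rw [hD, Finset.sum_range_succ'
      (fun i => (A ^ (j + 1 - 1 - i)).mulVec (Fp.mulVec (uvF z.2.2 i))) j,
      show j + 1 - 1 - 0 = j from by omega]
    abel


lemma predMap_step {τ p : ℕ} (hτ0 : 0 < τ) (hp0 : 0 < p) (hpτ : p ≤ τ)
    (A : Matrix (Fin n) (Fin n) ℝ) (B : Matrix (Fin n) (Fin m) ℝ)
    (F₀ : Matrix (Fin n) (Fin k₀) ℝ) (Fp : Matrix (Fin n) (Fin l) ℝ)
    (z : (Fin n → ℝ) × (Fin τ → Fin m → ℝ) × (Fin p → Fin l → ℝ))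
    (u : Fin m → ℝ) (d₀ : Fin k₀ → ℝ) (δf : Fin l → ℝ) :
    predMapP τ p A B Fp (gAugP τ p hτ0 hp0 A B F₀ Fp z u d₀ δf) =
      fAuxP τ p A B F₀ Fp (predMapP τ p A B Fp z) u d₀ δf := by
  obtain ⟨t, rfl⟩ : ∃ t, τ = t + 1 := ⟨τ - 1, by omega⟩
  obtain ⟨s, rfl⟩ : ∃ s, p = s + 1 := ⟨p - 1, by omega⟩
  have hst : s ≤ t := by omega
  have hx : (A ^ (t + 1)).mulVec
        (A.mulVec z.1 + B.mulVec (uvF z.2.1 0) + F₀.mulVec d₀ + Fp.mulVec (uvF z.2.2 0)) =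
      (A ^ (t + 1 + 1)).mulVec z.1 + (A ^ (t + 1)).mulVec (B.mulVec (uvF z.2.1 0)) +
        (A ^ (t + 1)).mulVec (F₀.mulVec d₀) + (A ^ (t + 1)).mulVec (Fp.mulVec (uvF z.2.2 0)) := by
    rw [Matrix.mulVec_add, Matrix.mulVec_add, Matrix.mulVec_add, Matrix.mulVec_mulVec,
      ← pow_succ]
  have hLu : (∑ i ∈ Finset.range (t + 1),
        (A ^ (t + 1 - 1 - i)).mulVec
          (B.mulVec (uvF (gAugP (t + 1) (s + 1) hτ0 hp0 A B F₀ Fp z u d₀ δf).2.1 i))) =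
      (∑ i ∈ Finset.range t, (A ^ (t - i)).mulVec (B.mulVec (uvF z.2.1 (i + 1)))) +
        B.mulVec u := by
    rw [Finset.sum_range_succ]
    congr 1
    · exact Finset.sum_congr rfl fun i hi => by
        have hi' := Finset.mem_range.mp hi
        rw [g_u_mid hτ0 hp0 A B F₀ Fp z u d₀ δf (by omega),
          show t + 1 - 1 - i = t - i from by omega]
    · rw [g_u_last hτ0 hp0 A B F₀ Fp z u d₀ δf (by omega) (by omega),
        show t + 1 - 1 - t = 0 from by omega, pow_zero, Matrix.one_mulVec]
  have hLd : (∑ i ∈ Finset.range (s + 1),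
        (A ^ (t + 1 - 1 - i)).mulVec
          (Fp.mulVec (uvF (gAugP (t + 1) (s + 1) hτ0 hp0 A B F₀ Fp z u d₀ δf).2.2 i))) =
      (∑ i ∈ Finset.range s, (A ^ (t - i)).mulVec (Fp.mulVec (uvF z.2.2 (i + 1)))) +
        (A ^ (t - s)).mulVec (Fp.mulVec δf) := by
    rw [Finset.sum_range_succ]
    congr 1
    · exact Finset.sum_congr rfl fun i hi => by
        have hi' := Finset.mem_range.mp hi
        rw [g_d_mid hτ0 hp0 A B F₀ Fp z u d₀ δf (by omega),
          show t + 1 - 1 - i = t - i from by omega]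
    · rw [g_d_last hτ0 hp0 A B F₀ Fp z u d₀ δf (by omega) (by omega),
        show t + 1 - 1 - s = t - s from by omega]
  have hRu : A.mulVec (∑ i ∈ Finset.range (t + 1),
        (A ^ (t + 1 - 1 - i)).mulVec (B.mulVec (uvF z.2.1 i))) =
      (∑ i ∈ Finset.range t, (A ^ (t - i)).mulVec (B.mulVec (uvF z.2.1 (i + 1)))) +
        (A ^ (t + 1)).mulVec (B.mulVec (uvF z.2.1 0)) := by
    rw [mulVec_sum]
    rw [show (∑ i ∈ Finset.range (t + 1),
          A.mulVec ((A ^ (t + 1 - 1 - i)).mulVec (B.mulVec (uvF z.2.1 i)))) =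
        ∑ i ∈ Finset.range (t + 1), (A ^ (t + 1 - i)).mulVec (B.mulVec (uvF z.2.1 i)) from
      Finset.sum_congr rfl fun i hi => by
        have hi' := Finset.mem_range.mp hi
        rw [Matrix.mulVec_mulVec, ← pow_succ', show t + 1 - 1 - i = t - i from by omega,
          show (t - i) + 1 = t + 1 - i from by omega]]
    rw [Finset.sum_range_succ'
      (fun i => (A ^ (t + 1 - i)).mulVec (B.mulVec (uvF z.2.1 i))) t]
    congr 1
    exact Finset.sum_congr rfl fun i hi => by
      rw [show t + 1 - (i + 1) = t - i from by omega]
  have hRd : A.mulVec (∑ i ∈ Finset.range (s + 1),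
        (A ^ (t + 1 - 1 - i)).mulVec (Fp.mulVec (uvF z.2.2 i))) =
      (∑ i ∈ Finset.range s, (A ^ (t - i)).mulVec (Fp.mulVec (uvF z.2.2 (i + 1)))) +
        (A ^ (t + 1)).mulVec (Fp.mulVec (uvF z.2.2 0)) := by
    rw [mulVec_sum]
    rw [show (∑ i ∈ Finset.range (s + 1),
          A.mulVec ((A ^ (t + 1 - 1 - i)).mulVec (Fp.mulVec (uvF z.2.2 i)))) =
        ∑ i ∈ Finset.range (s + 1), (A ^ (t + 1 - i)).mulVec (Fp.mulVec (uvF z.2.2 i)) from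
      Finset.sum_congr rfl fun i hi => by
        have hi' := Finset.mem_range.mp hi
        rw [Matrix.mulVec_mulVec, ← pow_succ', show t + 1 - 1 - i = t - i from by omega,
          show (t - i) + 1 = t + 1 - i from by omega]]
    rw [Finset.sum_range_succ'
      (fun i => (A ^ (t + 1 - i)).mulVec (Fp.mulVec (uvF z.2.2 i))) s]
    congr 1
    exact Finset.sum_congr rfl fun i hi => by
      rw [show t + 1 - (i + 1) = t - i from by omega]
  rw [predMapP_range, g_fst, hx, hLu, hLd]
  unfold fAuxP
  have hAz : A.mulVec ((A ^ (t + 1)).mulVec z.1) = (A ^ (t + 1 + 1)).mulVec z.1 := by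
    rw [Matrix.mulVec_mulVec, ← pow_succ']
  rw [predMapP_range, Matrix.mulVec_add, Matrix.mulVec_add, hRu, hRd, hAz,
    show t + 1 - (s + 1) = t - s from by omega]
  abel


lemma ESet_zero (A : Matrix (Fin n) (Fin n) ℝ) (F₀ : Matrix (Fin n) (Fin k₀) ℝ)
    (Fp : Matrix (Fin n) (Fin l) ℝ) (D₀ : Set (Fin k₀ → ℝ)) (Dp : Set (Fin l → ℝ)) :
    ESet A F₀ Fp D₀ Dp 0 0 = 0 := by
  simp [ESet]

lemma ESet_succ_mem {p : ℕ} (hp0 : 0 < p) (A : Matrix (Fin n) (Fin n) ℝ)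
    (F₀ : Matrix (Fin n) (Fin k₀) ℝ) (Fp : Matrix (Fin n) (Fin l) ℝ)
    (D₀ : Set (Fin k₀ → ℝ)) (Dp : Set (Fin l → ℝ)) (hDp : Dp.Nonempty) (j : ℕ)
    (v : Fin n → ℝ) :
    v ∈ ESet A F₀ Fp D₀ Dp (j + 1) (j + 1 - p) ↔
      ∃ d₀ ∈ D₀, ∃ δf ∈ Dp, ∃ e ∈ ESet A F₀ Fp D₀ Dp j (j - p),
        v = (A ^ j).mulVec (F₀.mulVec d₀) +
          (if p ≤ j then (A ^ (j - p)).mulVec (Fp.mulVec δf) else 0) + e := by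
  have hS : (∑ i ∈ Finset.Icc 1 (j + 1), (fun w => (A ^ (i - 1)).mulVec (F₀.mulVec w)) '' D₀) =
      (∑ i ∈ Finset.Icc 1 j, (fun w => (A ^ (i - 1)).mulVec (F₀.mulVec w)) '' D₀) +
        (fun w => (A ^ j).mulVec (F₀.mulVec w)) '' D₀ := by
    rw [Finset.sum_Icc_succ_top (by omega)]
    norm_num
  by_cases hpj : p ≤ j
  · have h1 : j + 1 - p = (j - p) + 1 := by omega
    have hT : (∑ i ∈ Finset.Icc 1 (j - p + 1),
          (fun w => (A ^ (i - 1)).mulVec (Fp.mulVec w)) '' Dp) =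
        (∑ i ∈ Finset.Icc 1 (j - p), (fun w => (A ^ (i - 1)).mulVec (Fp.mulVec w)) '' Dp) +
          (fun w => (A ^ (j - p)).mulVec (Fp.mulVec w)) '' Dp := by
      rw [Finset.sum_Icc_succ_top (by omega)]
      norm_num
    rw [h1]
    simp only [ESet, hS, hT, if_pos hpj]
    constructor
    · intro hv
      obtain ⟨a, ha, b, hb, hab⟩ := Set.mem_add.mp hv
      obtain ⟨a1, ha1, a2, ha2, ha12⟩ := Set.mem_add.mp ha
      obtain ⟨b1, hb1, b2, hb2, hb12⟩ := Set.mem_add.mp hb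
      obtain ⟨d₀, hd₀, hfd⟩ := ha2
      obtain ⟨δf, hδf, hgd⟩ := hb2
      have hfd' : (A ^ j).mulVec (F₀.mulVec d₀) = a2 := hfd
      have hgd' : (A ^ (j - p)).mulVec (Fp.mulVec δf) = b2 := hgd
      refine ⟨d₀, hd₀, δf, hδf, a1 + b1, Set.mem_add.mpr ⟨a1, ha1, b1, hb1, rfl⟩, ?_⟩
      rw [← hab, ← ha12, ← hb12, hfd', hgd']
      abel
    · rintro ⟨d₀, hd₀, δf, hδf, e, he, rfl⟩
      obtain ⟨a1, ha1, b1, hb1, hab⟩ := Set.mem_add.mp he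
      refine Set.mem_add.mpr ⟨a1 + (A ^ j).mulVec (F₀.mulVec d₀),
        Set.mem_add.mpr ⟨a1, ha1, _, ⟨d₀, hd₀, rfl⟩, rfl⟩,
        b1 + (A ^ (j - p)).mulVec (Fp.mulVec δf),
        Set.mem_add.mpr ⟨b1, hb1, _, ⟨δf, hδf, rfl⟩, rfl⟩, ?_⟩
      rw [← hab]
      abel
  · have h1 : j + 1 - p = 0 := by omega
    have h2 : j - p = 0 := by omega
    rw [h1, h2]
    simp only [ESet, hS, if_neg hpj]
    constructor
    · intro hv
      obtain ⟨a, ha, b, hb, hab⟩ := Set.mem_add.mp hv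
      obtain ⟨a1, ha1, a2, ha2, ha12⟩ := Set.mem_add.mp ha
      obtain ⟨d₀, hd₀, hfd⟩ := ha2
      have hfd' : (A ^ j).mulVec (F₀.mulVec d₀) = a2 := hfd
      refine ⟨d₀, hd₀, hDp.choose, hDp.choose_spec, a1 + b,
        Set.mem_add.mpr ⟨a1, ha1, b, hb, rfl⟩, ?_⟩
      rw [← hab, ← ha12, hfd']
      abel
    · rintro ⟨d₀, hd₀, δf, hδf, e, he, rfl⟩
      obtain ⟨a1, ha1, b1, hb1, hab⟩ := Set.mem_add.mp he
      refine Set.mem_add.mpr ⟨a1 + (A ^ j).mulVec (F₀.mulVec d₀),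
        Set.mem_add.mpr ⟨a1, ha1, _, ⟨d₀, hd₀, rfl⟩, rfl⟩, b1, hb1, ?_⟩
      rw [← hab]
      abel

end CpextAux

open CpextAux

/-- (Theorem 2) If `Ĉ_p` is the maximal controlled invariant set of `Σ_aux^prev` within `X̂`
and `Ĉ_p = ⋂_{j≥0} V̂_j`, then `C_{p,ext}` is the maximal controlled invariant set of the
augmented system `Σ_aug^prev` within `S_p`. -/
theorem cpext_maximal (n m k₀ l : ℕ) (hn : 0 < n) (hm : 0 < m) (hk : 0 < k₀) (hl : 0 < l)
    (τ p : ℕ) (hτ : 1 ≤ τ) (hp1 : 1 ≤ p) (hpτ : p ≤ τ)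
    (A : Matrix (Fin n) (Fin n) ℝ) (B : Matrix (Fin n) (Fin m) ℝ)
    (F₀ : Matrix (Fin n) (Fin k₀) ℝ) (Fp : Matrix (Fin n) (Fin l) ℝ)
    (U : Set (Fin m → ℝ)) (D₀ : Set (Fin k₀ → ℝ)) (Dp : Set (Fin l → ℝ))
    (X : Set (Fin n → ℝ)) (hD₀ : D₀.Nonempty) (hDp : Dp.Nonempty)
    (Chp : Set (Fin n → ℝ))
    (hChp : CtrlInvAuxP τ p A B F₀ Fp U D₀ Dp X Chp)
    (hChpMax : ∀ Ch' : Set (Fin n → ℝ),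
      CtrlInvAuxP τ p A B F₀ Fp U D₀ Dp X Ch' → Ch' ⊆ Chp)
    (hChpLim : Chp = ⋂ j : ℕ, VhatAuxP τ p A B F₀ Fp U D₀ Dp X j) :
    CtrlInvAugP τ p hτ hp1 A B F₀ Fp U D₀ Dp X (CpExt τ p A B F₀ Fp U D₀ Dp X Chp) ∧
      ∀ C : Set ((Fin n → ℝ) × (Fin τ → Fin m → ℝ) × (Fin p → Fin l → ℝ)),
        CtrlInvAugP τ p hτ hp1 A B F₀ Fp U D₀ Dp X C →
          C ⊆ CpExt τ p A B F₀ Fp U D₀ Dp X Chp := by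
  have hzeroE : (0 : Fin n → ℝ) ∈ ESet A F₀ Fp D₀ Dp 0 (0 - p) := by
    rw [show (0 : ℕ) - p = 0 from by omega, ESet_zero]
    exact Set.mem_zero.mpr rfl
  constructor
  · constructor
    · exact fun z hz => hz.2
    · intro z hz
      obtain ⟨⟨hJ, hT⟩, hSf⟩ := hz
      have hTau : predMapP τ p A B Fp z ∈ Chp := hT
      obtain ⟨u, hu, hstep⟩ := hChp.2 _ hTau
      refine ⟨u, hu, fun d₀ hd₀ δf hδf => ?_⟩
      have HJ : ∀ j, j ≤ τ →
          phiJ A B Fp j z ∈ minkDiff X (ESet A F₀ Fp D₀ Dp j (j - p)) := by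
        intro j hj
        rcases eq_or_lt_of_le hj with rfl | hlt
        · rw [phiJ_tau A B Fp hpτ]
          exact hChp.1 hTau
        · exact Set.mem_iInter₂.mp hJ j (Finset.mem_range.mpr hlt)
      have hJ' : ∀ j, j < τ →
          gAugP τ p hτ hp1 A B F₀ Fp z u d₀ δf ∈ CpJ τ p A B F₀ Fp D₀ Dp X j := by
        intro j hjτ
        show phiJ A B Fp j (gAugP τ p hτ hp1 A B F₀ Fp z u d₀ δf) ∈
          minkDiff X (ESet A F₀ Fp D₀ Dp j (j - p))
        rw [phiJ_step hτ hp1 A B F₀ Fp j hjτ z u d₀ δf]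
        simp only [minkDiff, Set.mem_setOf_eq]
        intro y hy
        have hmem : (A ^ j).mulVec (F₀.mulVec d₀) +
              (if p ≤ j then (A ^ (j - p)).mulVec (Fp.mulVec δf) else 0) + y ∈
            ESet A F₀ Fp D₀ Dp (j + 1) (j + 1 - p) :=
          (ESet_succ_mem hp1 A F₀ Fp D₀ Dp hDp j _).mpr ⟨d₀, hd₀, δf, hδf, y, hy, rfl⟩
        have hmem2 := HJ (j + 1) (by omega) _ hmem
        convert hmem2 using 1
        abel
      have hx1 : (gAugP τ p hτ hp1 A B F₀ Fp z u d₀ δf).1 ∈ X := by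
        have h0 : phiJ A B Fp 0 (gAugP τ p hτ hp1 A B F₀ Fp z u d₀ δf) ∈
            minkDiff X (ESet A F₀ Fp D₀ Dp 0 (0 - p)) := hJ' 0 hτ
        rw [phiJ_zero] at h0
        simpa using h0 0 hzeroE
      refine ⟨⟨Set.mem_iInter₂.mpr fun j hj => hJ' j (Finset.mem_range.mp hj), ?_⟩,
        hx1, ?_, ?_⟩
      · show predMapP τ p A B Fp (gAugP τ p hτ hp1 A B F₀ Fp z u d₀ δf) ∈ Chp
        rw [predMap_step hτ hp1 hpτ A B F₀ Fp z u d₀ δf]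
        exact hstep d₀ hd₀ δf hδf
      · intro i
        show (if h : (i : ℕ) + 1 < τ then z.2.1 ⟨(i : ℕ) + 1, h⟩ else u) ∈ U
        by_cases h : (i : ℕ) + 1 < τ
        · rw [dif_pos h]; exact hSf.2.1 _
        · rw [dif_neg h]; exact hu
      · intro i
        show (if h : (i : ℕ) + 1 < p then z.2.2 ⟨(i : ℕ) + 1, h⟩ else δf) ∈ Dp
        by_cases h : (i : ℕ) + 1 < p
        · rw [dif_pos h]; exact hSf.2.2 _
        · rw [dif_neg h]; exact hδf
  · intro C hC
    obtain ⟨hCsafe, hCinv⟩ := hC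
    have Q : ∀ j, j ≤ τ → ∀ w ∈ C, ∀ e ∈ ESet A F₀ Fp D₀ Dp j (j - p),
        ∃ w' ∈ C, w'.1 = phiJ A B Fp j w + e := by
      intro j
      induction j with
      | zero =>
        intro _ w hw e he
        rw [show (0 : ℕ) - p = 0 from by omega, ESet_zero] at he
        refine ⟨w, hw, ?_⟩
        rw [phiJ_zero, Set.mem_zero.mp he, add_zero]
      | succ j ih =>
        intro hj w hw e he
        obtain ⟨d₀, hd₀, δf, hδf, e', he', rfl⟩ :=
          (ESet_succ_mem hp1 A F₀ Fp D₀ Dp hDp j e).mp he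
        obtain ⟨u, hu, hstep⟩ := hCinv w hw
        obtain ⟨w2, hw2, hw2eq⟩ := ih (by omega) _ (hstep d₀ hd₀ δf hδf) e' he'
        refine ⟨w2, hw2, ?_⟩
        rw [hw2eq, phiJ_step hτ hp1 A B F₀ Fp j (by omega) w u d₀ δf]
        abel
    have HX : ∀ w ∈ C, ∀ j, j ≤ τ →
        phiJ A B Fp j w ∈ minkDiff X (ESet A F₀ Fp D₀ Dp j (j - p)) := by
      intro w hw j hj
      simp only [minkDiff, Set.mem_setOf_eq]
      intro y hy
      obtain ⟨w', hw', heq⟩ := Q j hj w hw y hy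
      rw [← heq]
      exact (hCsafe hw').1
    have hCh' : CtrlInvAuxP τ p A B F₀ Fp U D₀ Dp X (predMapP τ p A B Fp '' C) := by
      constructor
      · rintro _ ⟨w, hw, rfl⟩
        rw [← phiJ_tau A B Fp hpτ]
        exact HX w hw τ le_rfl
      · rintro _ ⟨w, hw, rfl⟩
        obtain ⟨u, hu, hstep⟩ := hCinv w hw
        refine ⟨u, hu, fun d₀ hd₀ δf hδf => ?_⟩
        exact ⟨_, hstep d₀ hd₀ δf hδf, predMap_step hτ hp1 hpτ A B F₀ Fp w u d₀ δf⟩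
    intro z hz
    refine ⟨⟨Set.mem_iInter₂.mpr fun j hj => ?_, ?_⟩, hCsafe hz⟩
    · exact HX z hz j (le_of_lt (Finset.mem_range.mp hj))
    · exact hChpMax _ (hCh') ⟨z, hz, rfl⟩
end
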